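/- arXiv:1708.07286 — 5 statements merged into one kernel-verified Lean document; each statement's English description precedes it below -/
import Mathlib

section
/- If G is connected and balanced, κ > 0, and x is a global minimum of E, then xᵢ ≠ 0 for all i. -/
/-!
Since the graph is balanced and connected, there is a switching `σ : V → {±1}` with
`σ i σ j γ i j = |γ i j|`: take `σ v = (-1)^(number of negative edges on a walk from a root to v)`,
which is well defined because every closed walk splits into cycles. As `W` is even, replacing
`x` by `z = σ |x|` keeps the potential term and can only lower the interaction term, so `z` is
again a minimiser. If some `x i` vanishes, either `x = 0`, whose energy `n W(0)` exceeds
`E(m, …, m) = 0`, or there is an edge `a b` with `z a = 0 ≠ z b`. In the second case the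
interaction term has a nonzero derivative in `z a`: `σ a` times it is
`-κ ∑ⱼ (|γ a j| + |γ j a|) |x j| < 0`. Since `W t ≤ W 0` for small `t`, moving `z a` slightly
away from `0` lowers the energy.
-/

open Finset Function

lemma Relation.ReflTransGen.exists_rel_of_not {α : Type*} {r : α → α → Prop} {p : α → Prop}
    {a b : α} (h : Relation.ReflTransGen r a b) (ha : p a) (hb : ¬p b) :
    ∃ c d, r c d ∧ p c ∧ ¬p d := by
  induction h with
  | refl => exact absurd ha hb
  | @tail c d _ hcd ih =>
    by_cases hc : p c
    · exact ⟨c, d, hcd, hc, hb⟩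
    · exact ih hc

lemma Function.Even.apply_abs {α β : Type*} [AddGroup α] [LinearOrder α] {f : α → β}
    (hf : f.Even) (t : α) : f |t| = f t := by
  rcases abs_choice t with h | h <;> rw [h]
  exact hf t

lemma exists_abs_le_and_quadratic_neg (D S : ℝ) {m : ℝ} (hm : 0 < m) (hS : S ≠ 0) :
    ∃ s, |s| ≤ m ∧ D * s ^ 2 - 2 * s * S < 0 := by
  set ε := min (m / |S|) (1 / (|D| + 1))
  have hε : 0 < ε := lt_min (div_pos hm (abs_pos.2 hS)) (by positivity)
  refine ⟨ε * S, ?_, ?_⟩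
  · rw [abs_mul, abs_of_pos hε, ← le_div_iff₀ (abs_pos.2 hS)]
    exact min_le_left _ _
  · have hεD : ε * (|D| + 1) ≤ 1 := (le_div_iff₀ (by positivity)).1 (min_le_right _ _)
    have hDε : D * ε < 2 := by nlinarith [le_abs_self D]
    have : D * (ε * S) ^ 2 - 2 * (ε * S) * S = ε * S ^ 2 * (D * ε - 2) := by ring
    rw [this]
    exact mul_neg_of_pos_of_neg (mul_pos hε (sq_pos_of_ne_zero hS)) (by linarith)

section SignedWalks

variable {V : Type*} (γ : V → V → ℝ)

def IsBalanced : Prop :=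
  ∀ (k : ℕ) (c : Fin (k + 1) → V), c 0 = c (Fin.last k) →
    (∀ i j : Fin k, c i.castSucc = c j.castSucc → i = j) →
    (∀ i : Fin k, γ (c i.castSucc) (c i.succ) ≠ 0) →
    Even #{i : Fin k | γ (c i.castSucc) (c i.succ) < 0}

-- `c 0, …, c k` is a walk along the nonzero entries of `γ`; `c` past `k` plays no role.
def IsWalk (c : ℕ → V) (k : ℕ) : Prop := ∀ t < k, γ (c t) (c (t + 1)) ≠ 0

noncomputable def negSteps (c : ℕ → V) (k : ℕ) : ℕ :=
  ∑ t ∈ range k, if γ (c t) (c (t + 1)) < 0 then 1 else 0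

variable {γ}

lemma negSteps_congr {c c' : ℕ → V} {k : ℕ} (h : ∀ t ≤ k, c t = c' t) :
    negSteps γ c k = negSteps γ c' k :=
  sum_congr rfl fun t ht ↦ by
    rw [mem_range] at ht
    rw [h t ht.le, h (t + 1) ht]

lemma negSteps_add (c : ℕ → V) (k₁ k₂ : ℕ) :
    negSteps γ c (k₁ + k₂) = negSteps γ c k₁ + negSteps γ (fun t ↦ c (k₁ + t)) k₂ := by
  simp only [negSteps, sum_range_add, add_assoc]

lemma IsWalk.congr {c c' : ℕ → V} {k : ℕ} (hw : IsWalk γ c k) (h : ∀ t ≤ k, c t = c' t) :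
    IsWalk γ c' k := fun t ht ↦ by
  rw [← h t ht.le, ← h (t + 1) ht]
  exact hw t ht

lemma isWalk_add {c : ℕ → V} {k₁ k₂ : ℕ} :
    IsWalk γ c (k₁ + k₂) ↔ IsWalk γ c k₁ ∧ IsWalk γ (fun t ↦ c (k₁ + t)) k₂ := by
  refine ⟨fun hw ↦ ⟨fun t ht ↦ hw t (by omega), fun t ht ↦ hw (k₁ + t) (by omega)⟩, ?_⟩
  rintro ⟨h₁, h₂⟩ t ht
  obtain ht | ht := Nat.lt_or_ge t k₁
  · exact h₁ t ht
  · obtain ⟨s, rfl⟩ := Nat.exists_eq_add_of_le ht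
    exact h₂ s (by omega)

lemma isWalk_edge {u v : V} : IsWalk γ (fun t ↦ if t = 0 then u else v) 1 ↔ γ u v ≠ 0 := by
  simp [IsWalk]

lemma negSteps_edge (u v : V) :
    negSteps γ (fun t ↦ if t = 0 then u else v) 1 = if γ u v < 0 then 1 else 0 := by
  rw [negSteps, sum_range_one]
  simp

def walkAppend (c₁ c₂ : ℕ → V) (k₁ : ℕ) (t : ℕ) : V := if t ≤ k₁ then c₁ t else c₂ (t - k₁)

lemma walkAppend_of_le {c₁ c₂ : ℕ → V} {k₁ t : ℕ} (ht : t ≤ k₁) :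
    walkAppend c₁ c₂ k₁ t = c₁ t := if_pos ht

lemma walkAppend_add {c₁ c₂ : ℕ → V} {k₁ : ℕ} (h : c₁ k₁ = c₂ 0) (t : ℕ) :
    walkAppend c₁ c₂ k₁ (k₁ + t) = c₂ t := by
  unfold walkAppend
  split_ifs with ht
  · obtain rfl : t = 0 := by omega
    simpa using h
  · simp

lemma IsWalk.append {c₁ c₂ : ℕ → V} {k₁ k₂ : ℕ} (h₁ : IsWalk γ c₁ k₁) (h₂ : IsWalk γ c₂ k₂)
    (h : c₁ k₁ = c₂ 0) : IsWalk γ (walkAppend c₁ c₂ k₁) (k₁ + k₂) :=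
  isWalk_add.2 ⟨h₁.congr fun _ ht ↦ (walkAppend_of_le ht).symm,
    h₂.congr fun t _ ↦ (walkAppend_add h t).symm⟩

lemma negSteps_append {c₁ c₂ : ℕ → V} {k₁ k₂ : ℕ} (h : c₁ k₁ = c₂ 0) :
    negSteps γ (walkAppend c₁ c₂ k₁) (k₁ + k₂) = negSteps γ c₁ k₁ + negSteps γ c₂ k₂ := by
  rw [negSteps_add, negSteps_congr fun _ ht ↦ walkAppend_of_le ht,
    negSteps_congr fun t _ ↦ walkAppend_add h t]

lemma exists_walk_of_reflTransGen {u v : V}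
    (h : Relation.ReflTransGen (fun a b ↦ γ a b ≠ 0) u v) :
    ∃ c k, c 0 = u ∧ c k = v ∧ IsWalk γ c k := by
  induction h with
  | refl => exact ⟨fun _ ↦ u, 0, rfl, rfl, fun t ht ↦ absurd ht t.not_lt_zero⟩
  | @tail b w _ hbw ih =>
    obtain ⟨c, k, hc0, hck, hw⟩ := ih
    have hck' : c k = (fun t ↦ if t = 0 then b else w) 0 := hck
    refine ⟨walkAppend c _ k, k + 1, ?_, ?_, hw.append (isWalk_edge.2 hbw) hck'⟩
    · rwa [walkAppend_of_le k.zero_le]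
    · rw [walkAppend_add hck']
      rfl

lemma negSteps_eq_card (c : ℕ → V) (k : ℕ) :
    negSteps γ c k = #{i : Fin k | γ (c i) (c (i + 1)) < 0} := by
  rw [card_filter, negSteps,
    Fin.sum_univ_eq_sum_range (fun t ↦ if γ (c t) (c (t + 1)) < 0 then 1 else 0)]

lemma negSteps_eq_add_of_loop {c : ℕ → V} {i d : ℕ} (hloop : c i = c (i + d)) (r : ℕ) :
    negSteps γ c (i + d + r) = negSteps γ (fun t ↦ c (i + t)) d +
      negSteps γ (walkAppend c (fun t ↦ c (i + d + t)) i) (i + r) := by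
  have hc : c i = (fun t ↦ c (i + d + t)) 0 := hloop
  rw [negSteps_append hc, negSteps_add, negSteps_add]
  simp only [add_assoc]
  omega

lemma IsBalanced.even_negSteps_of_injective (hb : IsBalanced γ) {c : ℕ → V} {k : ℕ}
    (hw : IsWalk γ c k) (hc : c k = c 0) (hinj : ∀ i < k, ∀ j < k, c i = c j → i = j) :
    Even (negSteps γ c k) := by
  rw [negSteps_eq_card]
  exact hb k (fun t ↦ c t) hc.symm (fun i j h ↦ Fin.ext (hinj i i.2 j j.2 h)) (fun i ↦ hw i i.2)

theorem IsBalanced.even_negSteps (hb : IsBalanced γ) {k : ℕ} :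
    ∀ {c : ℕ → V}, IsWalk γ c k → c k = c 0 → Even (negSteps γ c k) := by
  induction k using Nat.strong_induction_on with
  | _ k ih =>
  intro c hw hc
  by_cases hinj : ∀ i < k, ∀ j < k, c i = c j → i = j
  · exact hb.even_negSteps_of_injective hw hc hinj
  obtain ⟨i, j, hij, hjk, hcij⟩ : ∃ i j, i < j ∧ j < k ∧ c i = c j := by
    push Not at hinj
    obtain ⟨i, hi, j, hj, hcij, hne⟩ := hinj
    obtain h | h := hne.lt_or_gt
    exacts [⟨i, j, h, hj, hcij⟩, ⟨j, i, h, hi, hcij.symm⟩]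
  obtain ⟨d, rfl⟩ := Nat.exists_eq_add_of_le hij.le
  obtain ⟨r, rfl⟩ := Nat.exists_eq_add_of_le hjk.le
  obtain ⟨⟨hwi, hwd⟩, hwr⟩ := isWalk_add.1 hw |>.imp_left isWalk_add.1
  have hloop : c i = (fun t ↦ c (i + d + t)) 0 := hcij
  rw [negSteps_eq_add_of_loop hcij r]
  refine (ih d (by omega) hwd (by simpa using hcij.symm)).add
    (ih (i + r) (by omega) (hwi.append hwr hloop) ?_)
  rw [walkAppend_add hloop, walkAppend_of_le i.zero_le]
  exact hc

lemma IsBalanced.neg_one_pow_negSteps_eq (hb : IsBalanced γ)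
    (hconn : ∀ u v, Relation.ReflTransGen (fun a b ↦ γ a b ≠ 0) u v)
    {c₁ c₂ : ℕ → V} {k₁ k₂ : ℕ} (h₁ : IsWalk γ c₁ k₁) (h₂ : IsWalk γ c₂ k₂)
    (h0 : c₁ 0 = c₂ 0) (hk : c₁ k₁ = c₂ k₂) :
    (-1 : ℝ) ^ negSteps γ c₁ k₁ = (-1) ^ negSteps γ c₂ k₂ := by
  obtain ⟨c, k, hc0, hck, hw⟩ := exists_walk_of_reflTransGen (hconn (c₁ k₁) (c₁ 0))
  have key : ∀ {c' : ℕ → V} {k' : ℕ}, IsWalk γ c' k' → c' 0 = c₁ 0 → c' k' = c₁ k₁ →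
      (Even (negSteps γ c' k') ↔ Even (negSteps γ c k)) := by
    intro c' k' hw' h0' hk'
    have hjoin : c' k' = c 0 := hk'.trans hc0.symm
    have := hb.even_negSteps (hw'.append hw hjoin)
      (by rw [walkAppend_add hjoin, walkAppend_of_le k'.zero_le, hck, h0'])
    rwa [negSteps_append hjoin, Nat.even_add] at this
  exact neg_one_pow_congr ((key h₁ rfl rfl).trans (key h₂ h0.symm hk.symm).symm)

theorem IsBalanced.exists_switching [Nonempty V] (hb : IsBalanced γ)
    (hconn : ∀ u v, Relation.ReflTransGen (fun a b ↦ γ a b ≠ 0) u v) :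
    ∃ σ : V → ℝ, (∀ v, |σ v| = 1) ∧ ∀ u v, σ u * σ v * γ u v = |γ u v| := by
  choose c k hc0 hck hw using fun v ↦
    exists_walk_of_reflTransGen (hconn (Classical.arbitrary V) v)
  refine ⟨fun v ↦ (-1) ^ negSteps γ (c v) (k v), fun v ↦ by simp, fun u v ↦ ?_⟩
  by_cases huv : γ u v = 0
  · simp [huv]
  have hcu : c u (k u) = (fun t ↦ if t = 0 then u else v) 0 := hck u
  have hσv : (-1 : ℝ) ^ negSteps γ (c v) (k v) =
      (-1) ^ negSteps γ (c u) (k u) * (-1) ^ (if γ u v < 0 then 1 else 0) := by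
    rw [← negSteps_edge, ← pow_add, ← negSteps_append hcu]
    refine hb.neg_one_pow_negSteps_eq hconn (hw v) ((hw u).append (isWalk_edge.2 huv) hcu) ?_ ?_
    · rw [walkAppend_of_le (Nat.zero_le _), hc0, hc0]
    · rw [walkAppend_add hcu, hck]
      rfl
  dsimp only
  rw [hσv, ← mul_assoc, ← pow_add, ← two_mul, pow_mul, neg_one_sq, one_pow, one_mul]
  split_ifs with hneg
  · rw [abs_of_neg hneg]
    ring
  · rw [abs_of_nonneg (not_lt.1 hneg)]
    ring

end SignedWalks

section Energy

variable {ι : Type*} [Fintype ι]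

lemma sum_sq_sub_update_of_eq_zero [DecidableEq ι] (γ : ι → ι → ℝ) {x : ι → ℝ} {a : ι}
    (hxa : x a = 0) (s : ℝ) :
    ∑ i, ∑ j, γ i j * (update x a s i - update x a s j) ^ 2 =
      ∑ i, ∑ j, γ i j * (x i - x j) ^ 2 + (∑ j, (γ a j + γ j a) - 2 * γ a a) * s ^ 2
        - 2 * s * ∑ j, (γ a j + γ j a) * x j := by
  have hupd : ∀ i, update x a s i = x i + if i = a then s else 0 := fun i ↦ by
    by_cases h : i = a <;> simp [h, hxa]
  have hexp : ∀ i j, γ i j * (update x a s i - update x a s j) ^ 2 =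
      γ i j * (x i - x j) ^ 2 + (if i = a then s ^ 2 * γ a j - 2 * s * (γ a j * x j) else 0)
        + (if j = a then s ^ 2 * γ i a - 2 * s * (γ i a * x i) else 0)
        - (if i = a then if j = a then 2 * γ a a * s ^ 2 else 0 else 0) := fun i j ↦ by
    rw [hupd, hupd]
    split_ifs with hi hj hj
    · subst hi hj
      rw [hxa]
      ring
    · subst hi
      rw [hxa]
      ring
    · subst hj
      rw [hxa]
      ring
    · ring
  simp only [hexp, sum_add_distrib, sum_sub_distrib, sum_ite_irrel, sum_const_zero, sum_ite_eq',
    mem_univ, if_true, ← mul_sum, add_mul]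
  ring

variable (W : ℝ → ℝ) (κ : ℝ) (γ : ι → ι → ℝ)

noncomputable def energy (x : ι → ℝ) : ℝ :=
  ∑ i, W (x i) + κ / 2 * ∑ i, ∑ j, γ i j * (x i - x j) ^ 2

lemma energy_const (c : ℝ) : energy W κ γ (fun _ ↦ c) = Fintype.card ι * W c := by
  simp [energy]

lemma energy_update_of_eq_zero [DecidableEq ι] {x : ι → ℝ} {a : ι} (hxa : x a = 0) (s : ℝ) :
    energy W κ γ (update x a s) = energy W κ γ x + (W s - W 0) + κ / 2 *
      ((∑ j, (γ a j + γ j a) - 2 * γ a a) * s ^ 2 - 2 * s * ∑ j, (γ a j + γ j a) * x j) := by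
  have hW : ∑ i, W (update x a s i) = ∑ i, W (x i) + (W s - W 0) := by
    rw [Fintype.sum_eq_add_sum_compl a, Fintype.sum_eq_add_sum_compl a (fun i ↦ W (x i)),
      update_self, hxa, sum_congr rfl fun i hi ↦ by rw [update_of_ne (by simpa using hi)]]
    ring
  rw [energy, energy, hW, sum_sq_sub_update_of_eq_zero γ hxa]
  ring

variable {W κ γ}

lemma energy_switch_le (heven : W.Even) (hκ : 0 ≤ κ) {σ : ι → ℝ}
    (hσ : ∀ i, |σ i| = 1) (hσγ : ∀ i j, σ i * σ j * γ i j = |γ i j|) (x : ι → ℝ) :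
    energy W κ γ (fun i ↦ σ i * |x i|) ≤ energy W κ γ x := by
  have hσsq : ∀ i, σ i ^ 2 = 1 := fun i ↦ by rw [← sq_abs, hσ, one_pow]
  have hW : ∀ i, W (σ i * |x i|) = W (x i) := fun i ↦ by
    rw [← heven.apply_abs, abs_mul, hσ, one_mul, abs_abs, heven.apply_abs]
  have hq : ∀ i j, γ i j * (σ i * |x i| - σ j * |x j|) ^ 2 ≤ γ i j * (x i - x j) ^ 2 := by
    intro i j
    have hcross : γ i j * (x i * x j) ≤ |γ i j| * (|x i| * |x j|) := by
      rw [← abs_mul, ← abs_mul]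
      exact le_abs_self _
    calc γ i j * (σ i * |x i| - σ j * |x j|) ^ 2
        = γ i j * (σ i ^ 2 * |x i| ^ 2 + σ j ^ 2 * |x j| ^ 2)
          - 2 * (σ i * σ j * γ i j) * (|x i| * |x j|) := by ring
      _ = γ i j * (x i ^ 2 + x j ^ 2) - 2 * |γ i j| * (|x i| * |x j|) := by
        rw [hσsq, hσsq, hσγ, sq_abs, sq_abs, one_mul, one_mul]
      _ ≤ γ i j * (x i - x j) ^ 2 := by nlinarith
  simp only [energy, hW]
  gcongr _ + _ * ∑ i, ∑ j, ?_ with i _ j _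
  exact hq i j

lemma exists_energy_lt_of_eq_zero [DecidableEq ι] {m : ℝ} (hm : 0 < m) (hκ : 0 < κ)
    (hW : ∀ t, |t| ≤ m → W t ≤ W 0) {x : ι → ℝ} {a : ι} (hxa : x a = 0)
    (hS : ∑ j, (γ a j + γ j a) * x j ≠ 0) :
    ∃ y, energy W κ γ y < energy W κ γ x := by
  obtain ⟨s, hsm, hs⟩ := exists_abs_le_and_quadratic_neg (∑ j, (γ a j + γ j a) - 2 * γ a a) _ hm hS
  refine ⟨update x a s, ?_⟩
  rw [energy_update_of_eq_zero W κ γ hxa]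
  nlinarith [hW s hsm]

lemma sum_mul_switch_ne_zero {σ : ι → ℝ}
    (hσγ : ∀ i j, σ i * σ j * γ i j = |γ i j|) {x : ι → ℝ} {a b : ι} (hab : γ a b ≠ 0)
    (hb : x b ≠ 0) : ∑ j, (γ a j + γ j a) * (σ j * |x j|) ≠ 0 := by
  have hσS : σ a * ∑ j, (γ a j + γ j a) * (σ j * |x j|) = ∑ j, (|γ a j| + |γ j a|) * |x j| := by
    rw [mul_sum]
    refine sum_congr rfl fun j _ ↦ ?_
    rw [← hσγ a j, ← hσγ j a]
    ring
  have hpos : 0 < ∑ j, (|γ a j| + |γ j a|) * |x j| :=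
    (mul_pos (add_pos_of_pos_of_nonneg (abs_pos.2 hab) (abs_nonneg _)) (abs_pos.2 hb)).trans_le
      (single_le_sum (f := fun j ↦ (|γ a j| + |γ j a|) * |x j|) (fun j _ ↦ by positivity)
        (mem_univ b))
  intro h
  rw [h, mul_zero] at hσS
  exact hpos.ne hσS

end Energy

theorem stmt7_general (n : ℕ) (γ : Fin n → Fin n → ℝ)
    (hconn : ∀ i j : Fin n, Relation.ReflTransGen (fun a b => γ a b ≠ 0) i j)
    (hbal : ∀ (k : ℕ) (c : Fin (k + 1) → Fin n),
        c 0 = c (Fin.last k) →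
        (∀ i j : Fin k, c i.castSucc = c j.castSucc → i = j) →
        (∀ i : Fin k, γ (c i.castSucc) (c i.succ) ≠ 0) →
        Even (Finset.univ.filter (fun i : Fin k => γ (c i.castSucc) (c i.succ) < 0)).card)
    (W : ℝ → ℝ) (m : ℝ) (hm : 0 < m)
    (hW : ContDiff ℝ 2 W) (heven : ∀ t, W (-t) = W t) (hWm : W m = 0)
    (hneg : ∀ t, t ∈ Set.Iio (-m) ∪ Set.Ioo 0 m → deriv W t < 0)
    (κ : ℝ) (hκ : 0 < κ)
    (E : (Fin n → ℝ) → ℝ)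
    (hE : ∀ x, E x = ∑ i, W (x i) + κ / 2 * ∑ i, ∑ j, γ i j * (x i - x j) ^ 2)
    (x : Fin n → ℝ) (hmin : ∀ y, E x ≤ E y) :
    ∀ i, x i ≠ 0 := by
  intro i₀ hx₀
  obtain rfl : E = energy W κ γ := funext hE
  have : Nonempty (Fin n) := ⟨i₀⟩
  obtain ⟨σ, hσ, hσγ⟩ := IsBalanced.exists_switching hbal hconn
  have hanti : StrictAntiOn W (Set.Icc 0 m) :=
    strictAntiOn_of_deriv_neg (convex_Icc 0 m) hW.continuous.continuousOn fun t ht ↦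
      hneg t (Or.inr (by simpa using ht))
  have hWle : ∀ t, |t| ≤ m → W t ≤ W 0 := fun t ht ↦ by
    rw [← Function.Even.apply_abs heven t]
    exact hanti.antitoneOn (Set.left_mem_Icc.2 hm.le) ⟨abs_nonneg t, ht⟩ (abs_nonneg t)
  by_cases hx : x = 0
  · have hW0 : W m < W 0 := hanti (Set.left_mem_Icc.2 hm.le) (Set.right_mem_Icc.2 hm.le) hm
    have h := hmin fun _ ↦ m
    rw [hx, show (0 : Fin n → ℝ) = fun _ ↦ 0 from rfl, energy_const, energy_const, hWm,
      Fintype.card_fin] at h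
    have hn : (0 : ℝ) < n := by exact_mod_cast i₀.pos
    nlinarith
  obtain ⟨v, hv⟩ := Function.ne_iff.1 hx
  obtain ⟨a, b, hab, ha, hb⟩ := (hconn i₀ v).exists_rel_of_not (p := fun i ↦ x i = 0) hx₀ hv
  obtain ⟨y, hy⟩ := exists_energy_lt_of_eq_zero hm hκ hWle (x := fun i ↦ σ i * |x i|)
    (by simp [ha]) (sum_mul_switch_ne_zero hσγ hab hb)
  exact (hy.trans_le ((energy_switch_le heven hκ.le hσ hσγ x).trans (hmin y))).false

/-- if `G` is connected and balanced, `κ > 0`, and `x` is a global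
minimum of `E`, then `xᵢ ≠ 0` for all `i`. -/
theorem stmt7 (n : ℕ) (γ : Fin n → Fin n → ℝ)
    (hsym : ∀ i j, γ i j = γ j i) (hdiag : ∀ i, γ i i = 0)
    (hconn : ∀ i j : Fin n, Relation.ReflTransGen (fun a b => γ a b ≠ 0) i j)
    (hbal : ∀ (k : ℕ) (c : Fin (k + 1) → Fin n),
        c 0 = c (Fin.last k) →
        (∀ i j : Fin k, c i.castSucc = c j.castSucc → i = j) →
        (∀ i : Fin k, γ (c i.castSucc) (c i.succ) ≠ 0) →
        Even (Finset.univ.filter (fun i : Fin k => γ (c i.castSucc) (c i.succ) < 0)).card)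
    (W : ℝ → ℝ) (m : ℝ) (hm : 0 < m)
    (hW : ContDiff ℝ 2 W) (heven : ∀ t, W (-t) = W t) (hWm : W m = 0)
    (hpos : ∀ t, t ∈ Set.Ioo (-m) 0 ∪ Set.Ioi m → 0 < deriv W t)
    (hneg : ∀ t, t ∈ Set.Iio (-m) ∪ Set.Ioo 0 m → deriv W t < 0)
    (hgrowth : Filter.Tendsto (fun t => W t / t ^ 2) (Filter.cocompact ℝ) Filter.atTop)
    (κ : ℝ) (hκ : 0 < κ)
    (E : (Fin n → ℝ) → ℝ)
    (hE : ∀ x, E x = ∑ i, W (x i) + κ / 2 * ∑ i, ∑ j, γ i j * (x i - x j) ^ 2)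
    (x : Fin n → ℝ) (hmin : ∀ y, E x ≤ E y) :
    ∀ i, x i ≠ 0 :=
  stmt7_general n γ hconn hbal W m hm hW heven hWm hneg κ hκ E hE x hmin
end

section
/- If G is connected and balanced with Cartwright–Harary partition V = V₁ ∪ V₂, κ > 0, and x is a global minimum of E, then all xᵢ are nonzero and xᵢ and xⱼ have the same sign if and only if i and j belong to the same part of the partition. -/
lemma stmt8_iff_aux (P Q R : Prop) : (P ↔ R) ↔ ((P ↔ Q) ↔ (Q ↔ R)) := by tauto

/-- if `G` is connected and balanced with Cartwright–Harary partition
(encoded by `σ`), `κ > 0`, and `x` is a global minimum of `E`, then all `xᵢ` are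
nonzero and `xᵢ`, `xⱼ` have the same sign iff `i` and `j` lie in the same part. -/
theorem stmt8 (n : ℕ) (γ : Fin n → Fin n → ℝ)
    (hsym : ∀ i j, γ i j = γ j i) (hdiag : ∀ i, γ i i = 0)
    (hconn : ∀ i j : Fin n, Relation.ReflTransGen (fun a b => γ a b ≠ 0) i j)
    (σ : Fin n → Bool)
    (hpart : ∀ i j, (σ i = σ j → 0 ≤ γ i j) ∧ (σ i ≠ σ j → γ i j ≤ 0))
    (W : ℝ → ℝ) (m : ℝ) (hm : 0 < m)
    (hW : ContDiff ℝ 2 W) (heven : ∀ t, W (-t) = W t) (hWm : W m = 0)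
    (hpos : ∀ t, t ∈ Set.Ioo (-m) 0 ∪ Set.Ioi m → 0 < deriv W t)
    (hneg : ∀ t, t ∈ Set.Iio (-m) ∪ Set.Ioo 0 m → deriv W t < 0)
    (hgrowth : Filter.Tendsto (fun t => W t / t ^ 2) (Filter.cocompact ℝ) Filter.atTop)
    (κ : ℝ) (hκ : 0 < κ)
    (E : (Fin n → ℝ) → ℝ)
    (hE : ∀ x, E x = ∑ i, W (x i) + κ / 2 * ∑ i, ∑ j, γ i j * (x i - x j) ^ 2)
    (x : Fin n → ℝ) (hmin : ∀ y, E x ≤ E y) :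
    (∀ i, x i ≠ 0) ∧ (∀ i j, 0 < x i * x j ↔ σ i = σ j) := by
  classical
  set s : Fin n → ℝ := fun i => if σ i then 1 else -1 with hs
  have hs1 : ∀ i, s i = 1 ∨ s i = -1 := by
    intro i; by_cases h : σ i <;> simp [hs, h]
  have hss : ∀ i, s i * s i = 1 := by
    intro i; rcases hs1 i with h | h <;> rw [h] <;> norm_num
  have hseq : ∀ i j, σ i = σ j → s i = s j := by
    intro i j h; simp [hs, h]
  have hWs : ∀ i t, W (s i * t) = W t := by
    intro i t; rcases hs1 i with h | h <;> rw [h]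
    · rw [one_mul]
    · rw [neg_one_mul, heven]
  have hWabs : ∀ t : ℝ, W |t| = W t := by
    intro t; rcases abs_cases t with ⟨h, _⟩ | ⟨h, _⟩ <;> rw [h]
    · exact heven t
  -- γ i j * (s i * s j) = |γ i j|
  have hgam : ∀ i j, γ i j * (s i * s j) = |γ i j| := by
    intro i j
    by_cases h : σ i = σ j
    · rw [hseq i j h, hss j, mul_one, abs_of_nonneg ((hpart i j).1 h)]
    · have hsij : s i * s j = -1 := by
        cases hi : σ i <;> cases hj : σ j
        · exact absurd (hi.trans hj.symm) h
        · simp [hs, hi, hj]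
        · simp [hs, hi, hj]
        · exact absurd (hi.trans hj.symm) h
      rw [hsij, abs_of_nonpos ((hpart i j).2 h)]; ring
  -- W strictly decreasing on [0, m]
  have hanti : StrictAntiOn W (Set.Icc 0 m) := by
    apply strictAntiOn_of_deriv_neg (convex_Icc 0 m) hW.continuous.continuousOn
    intro t ht
    rw [interior_Icc] at ht
    exact hneg t (Or.inr ⟨ht.1, ht.2⟩)
  have hW0 : 0 < W 0 := by
    have := hanti (Set.left_mem_Icc.mpr hm.le) (Set.right_mem_Icc.mpr hm.le) hm
    rw [hWm] at this; linarith
  set z : Fin n → ℝ := fun i => |x i| with hz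
  set x' : Fin n → ℝ := fun i => s i * z i with hx'
  have hWx' : ∀ i, W (x' i) = W (x i) := by
    intro i; rw [hx']; simp only []; rw [hWs, hz]; simp only []; rw [hWabs]
  -- pairwise difference identity
  have hd : ∀ i j, γ i j * (x i - x j) ^ 2 - γ i j * (x' i - x' j) ^ 2
      = 2 * (|γ i j * (x i * x j)| - γ i j * (x i * x j)) := by
    intro i j
    have h1 : x' i * x' i = x i * x i := by
      rw [hx']; simp only []
      rw [show s i * z i * (s i * z i) = (s i * s i) * (z i * z i) by ring, hss, one_mul, hz]
      simp [abs_mul_abs_self]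
    have h1' : x' j * x' j = x j * x j := by
      rw [hx']; simp only []
      rw [show s j * z j * (s j * z j) = (s j * s j) * (z j * z j) by ring, hss, one_mul, hz]
      simp [abs_mul_abs_self]
    have h2 : γ i j * (x' i * x' j) = |γ i j * (x i * x j)| := by
      rw [hx']; simp only []
      rw [show γ i j * (s i * z i * (s j * z j)) = (γ i j * (s i * s j)) * (z i * z j) by ring,
        hgam, hz]
      simp [abs_mul]
    linear_combination (-(γ i j)) * h1 + (-(γ i j)) * h1' + 2 * h2
  have hdnonneg : ∀ i j, 0 ≤ γ i j * (x i - x j) ^ 2 - γ i j * (x' i - x' j) ^ 2 := by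
    intro i j; rw [hd i j]
    have := le_abs_self (γ i j * (x i * x j)); linarith
  -- energy difference
  have hEdiff : E x - E x' = κ / 2 *
      ∑ i, ∑ j, (γ i j * (x i - x j) ^ 2 - γ i j * (x' i - x' j) ^ 2) := by
    rw [hE x, hE x']
    have hWsum : ∑ i, W (x' i) = ∑ i, W (x i) :=
      Finset.sum_congr rfl fun i _ => hWx' i
    rw [hWsum]
    simp only [Finset.sum_sub_distrib]
    ring
  have hsum0 : ∑ i, ∑ j, (γ i j * (x i - x j) ^ 2 - γ i j * (x' i - x' j) ^ 2) = 0 := by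
    have h1 : 0 ≤ ∑ i, ∑ j, (γ i j * (x i - x j) ^ 2 - γ i j * (x' i - x' j) ^ 2) :=
      Finset.sum_nonneg fun i _ => Finset.sum_nonneg fun j _ => hdnonneg i j
    have h2 := hmin x'
    nlinarith [hEdiff]
  have hterm : ∀ i j, γ i j * (x i - x j) ^ 2 - γ i j * (x' i - x' j) ^ 2 = 0 := by
    intro i j
    have h1 := (Finset.sum_eq_zero_iff_of_nonneg
      (fun i _ => Finset.sum_nonneg fun j _ => hdnonneg i j)).mp hsum0 i (Finset.mem_univ i)
    exact (Finset.sum_eq_zero_iff_of_nonneg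
      (fun j _ => hdnonneg i j)).mp h1 j (Finset.mem_univ j)
  have hedge0 : ∀ i j, 0 ≤ γ i j * (x i * x j) := by
    intro i j
    have h := hterm i j; rw [hd i j] at h
    have : |γ i j * (x i * x j)| = γ i j * (x i * x j) := by linarith
    rw [← this]; exact abs_nonneg _
  have hEeq : E x' = E x := by
    have := hEdiff; rw [hsum0] at this; linarith
  have hmin' : ∀ y, E x' ≤ E y := fun y => hEeq ▸ hmin y
  -- E of the reference configuration m·s is ≤ 0
  have hEms : E (fun i => s i * m) ≤ 0 := by
    rw [hE]
    have h1 : ∑ i, W ((fun i => s i * m) i) = 0 := by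
      apply Finset.sum_eq_zero; intro i _; rw [hWs, hWm]
    rw [h1]
    have h2 : ∑ i, ∑ j, γ i j * ((fun i => s i * m) i - (fun i => s i * m) j) ^ 2 ≤ 0 := by
      apply Finset.sum_nonpos; intro i _
      apply Finset.sum_nonpos; intro j _
      by_cases h : σ i = σ j
      · have hz0 : (fun i : Fin n => s i * m) i - (fun i => s i * m) j = 0 := by
          show s i * m - s j * m = 0
          rw [hseq i j h]; ring
        rw [hz0]
        simp
      · have := (hpart i j).2 h
        exact mul_nonpos_of_nonpos_of_nonneg this (sq_nonneg _)
    nlinarith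
  -- key propagation lemma: if z b = 0 then all γ-neighbors have z = 0
  have hzx : ∀ i, z i = 0 ↔ x i = 0 := by intro i; rw [hz]; simp
  have key : ∀ b, x b = 0 → ∀ c, γ b c ≠ 0 → x c = 0 := by
    intro b hb c hγc
    by_contra hc
    set S : ℝ := ∑ j, |γ b j| * z j with hS
    set Γ : ℝ := ∑ j, γ b j with hΓ
    have hSnonneg : ∀ j, (0:ℝ) ≤ |γ b j| * z j := by
      intro j; apply mul_nonneg (abs_nonneg _); rw [hz]; exact abs_nonneg _
    have hSpos : 0 < S := by
      apply Finset.sum_pos' (fun j _ => hSnonneg j) ⟨c, Finset.mem_univ c, ?_⟩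
      apply mul_pos (abs_pos.mpr hγc)
      rw [hz]; exact abs_pos.mpr hc
    set t : ℝ := min (m / 2) (S / (|Γ| + 1)) with ht
    have htpos : 0 < t := by
      apply lt_min (by linarith)
      positivity
    have htm : t < m := lt_of_le_of_lt (min_le_left _ _) (by linarith)
    have hWt : W t < W 0 := hanti (Set.left_mem_Icc.mpr hm.le) ⟨htpos.le, htm.le⟩ htpos
    have htΓ : t * Γ < 2 * S := by
      have h1 : t ≤ S / (|Γ| + 1) := min_le_right _ _
      have h2 : t * Γ ≤ t * |Γ| :=
        mul_le_mul_of_nonneg_left (le_abs_self Γ) htpos.le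
      have h3 : t * |Γ| ≤ S / (|Γ| + 1) * |Γ| :=
        mul_le_mul_of_nonneg_right h1 (abs_nonneg Γ)
      have h4 : S / (|Γ| + 1) * (|Γ| + 1) = S := by
        field_simp
      have h5 : 0 ≤ |Γ| := abs_nonneg Γ
      nlinarith [div_nonneg hSpos.le (by linarith : (0:ℝ) ≤ |Γ| + 1)]
    -- the perturbed configuration
    set w : Fin n → ℝ := Function.update z b t with hw
    set y : Fin n → ℝ := fun i => s i * w i with hy
    have hwb : w b = t := by rw [hw]; simp
    have hwj : ∀ j, j ≠ b → w j = z j := by intro j hj; rw [hw]; exact Function.update_of_ne hj _ _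
    have hzb : z b = 0 := (hzx b).mpr hb
    have hyj : ∀ j, j ≠ b → y j = x' j := by
      intro j hj; rw [hy, hx']; simp only []; rw [hwj j hj]
    have hyb : y b = s b * t := by rw [hy]; simp only []; rw [hwb]
    have hx'b : x' b = 0 := by rw [hx']; simp only []; rw [hzb, mul_zero]
    -- W part
    have hWpart : ∑ i, (W (y i) - W (x' i)) = W t - W 0 := by
      rw [Finset.sum_eq_single_of_mem b (Finset.mem_univ b)
        (fun j _ hj => by rw [hyj j hj, sub_self])]
      rw [hyb, hWs, hx'b]
    -- quadratic part
    set g : Fin n → Fin n → ℝ :=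
      fun i j => γ i j * ((y i - y j) ^ 2 - (x' i - x' j) ^ 2) with hg
    have goff : ∀ i j, i ≠ b → j ≠ b → g i j = 0 := by
      intro i j hi hj; rw [hg]; simp only []
      rw [hyj i hi, hyj j hj, sub_self, mul_zero]
    have gsym : ∀ i j, g i j = g j i := by
      intro i j; rw [hg]; simp only []; rw [hsym i j]; ring
    have gbb : g b b = 0 := by rw [hg]; simp only []; rw [hdiag]; ring
    have gval : ∀ j, g b j = γ b j * t ^ 2 - 2 * t * (|γ b j| * z j) := by
      intro j
      by_cases hj : j = b
      · subst hj; rw [gbb, hdiag, hzb]; ring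
      · rw [hg]; simp only []
        rw [hyb, hyj j hj, hx'b]
        simp only [hx']
        have e1 := hss b
        have e2 := hgam b j
        linear_combination (γ b j * t ^ 2) * e1 - (2 * t * z j) * e2
    have hQ : ∑ i, ∑ j, g i j = 2 * (t ^ 2 * Γ - 2 * t * S) := by
      have hrow : ∀ i, i ≠ b → ∑ j, g i j = g i b := by
        intro i hi
        exact Finset.sum_eq_single_of_mem b (Finset.mem_univ b)
          (fun j _ hj => goff i j hi hj)
      have h1 : ∑ i, ∑ j, g i j = (∑ j, g b j) + ∑ i ∈ Finset.univ.erase b, ∑ j, g i j := by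
        exact (Finset.add_sum_erase _ (fun i => ∑ j, g i j) (Finset.mem_univ b)).symm
      have h2 : ∑ i ∈ Finset.univ.erase b, ∑ j, g i j = ∑ i ∈ Finset.univ.erase b, g i b := by
        apply Finset.sum_congr rfl; intro i hi
        exact hrow i (Finset.mem_erase.mp hi).1
      have h3 : ∑ i ∈ Finset.univ.erase b, g i b = (∑ i, g i b) - g b b := by
        rw [← Finset.add_sum_erase _ (fun i => g i b) (Finset.mem_univ b)]; ring
      have h4 : ∑ i, g i b = ∑ j, g b j := Finset.sum_congr rfl fun i _ => gsym i b
      have h5 : ∑ j, g b j = t ^ 2 * Γ - 2 * t * S := by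
        rw [Finset.sum_congr rfl fun j _ => gval j]
        rw [Finset.sum_sub_distrib, ← Finset.sum_mul, hΓ, ← Finset.mul_sum, hS]
        ring
      rw [h1, h2, h3, h4, h5, gbb]; ring
    -- assemble the energy difference
    have hEy : E y - E x' = (W t - W 0) + κ / 2 * (2 * (t ^ 2 * Γ - 2 * t * S)) := by
      have hWs' : ∑ i, W (y i) - ∑ i, W (x' i) = W t - W 0 := by
        rw [← Finset.sum_sub_distrib]; exact hWpart
      have hQ' : ∑ i, ∑ j, g i j = (∑ i, ∑ j, γ i j * (y i - y j) ^ 2)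
          - ∑ i, ∑ j, γ i j * (x' i - x' j) ^ 2 := by
        simp only [hg, mul_sub, Finset.sum_sub_distrib]
      rw [hE y, hE x', ← hQ, hQ']
      linarith [hWs']
    have hcontra : E y - E x' < 0 := by
      rw [hEy]
      have : κ / 2 * (2 * (t ^ 2 * Γ - 2 * t * S)) = κ * t * (t * Γ - 2 * S) := by ring
      rw [this]
      have h6 : κ * t * (t * Γ - 2 * S) < 0 :=
        mul_neg_of_pos_of_neg (mul_pos hκ htpos) (by linarith)
      linarith
    have := hmin' y
    linarith
  -- all x i nonzero
  have hnz : ∀ i, x i ≠ 0 := by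
    intro i0 hi0
    have hall : ∀ j, x j = 0 := by
      intro j
      have h := hconn i0 j
      induction h with
      | refl => exact hi0
      | tail hab hbc ih => exact key _ ih _ hbc
    have hEx : E x = n * W 0 := by
      rw [hE]
      have h1 : ∑ i, W (x i) = n * W 0 := by
        rw [Finset.sum_congr rfl fun i _ => by rw [hall i]]
        simp [mul_comm]
      have h2 : ∑ i, ∑ j, γ i j * (x i - x j) ^ 2 = 0 := by
        apply Finset.sum_eq_zero; intro i _
        apply Finset.sum_eq_zero; intro j _
        rw [hall i, hall j]; ring
      rw [h1, h2, mul_zero, add_zero]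
    have hn1 : (1:ℝ) ≤ n := by
      have : 0 < n := Fin.pos_iff_nonempty.mpr ⟨i0⟩
      exact_mod_cast this
    have := hmin (fun i => s i * m)
    nlinarith [hEms, hW0]
  -- edge sign lemma
  have hedge : ∀ a b, γ a b ≠ 0 → (0 < x a * x b ↔ σ a = σ b) := by
    intro a b hγab
    have h0 := hedge0 a b
    have hne : x a * x b ≠ 0 := mul_ne_zero (hnz a) (hnz b)
    by_cases hσ : σ a = σ b
    · have hγpos : 0 < γ a b := lt_of_le_of_ne ((hpart a b).1 hσ) (Ne.symm hγab)
      have hpos' : 0 < x a * x b := by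
        rcases (mul_nonneg_iff_of_pos_left hγpos).mp h0 |>.lt_or_eq with h | h
        · exact h
        · exact absurd h.symm hne
      simp [hσ, hpos']
    · have hγneg : γ a b < 0 := lt_of_le_of_ne ((hpart a b).2 hσ) hγab
      have hneg' : x a * x b < 0 := by
        rcases lt_trichotomy (x a * x b) 0 with h | h | h
        · exact h
        · exact absurd h hne
        · nlinarith
      simp only [hσ, iff_false]
      intro h; exact absurd h (not_lt.mpr hneg'.le)
  -- sign product lemma
  have hprod : ∀ a b : Fin n, (0 < x a * x b ↔ (0 < x a ↔ 0 < x b)) := by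
    intro a b
    rcases (hnz a).lt_or_gt with ha | ha <;> rcases (hnz b).lt_or_gt with hb | hb
    · simp [mul_pos_of_neg_of_neg ha hb, ha.not_gt, hb.not_gt]
    · simp [(mul_neg_of_neg_of_pos ha hb).not_gt, ha.not_gt, hb]
    · simp [(mul_neg_of_pos_of_neg ha hb).not_gt, ha, hb.not_gt]
    · simp [mul_pos ha hb, ha, hb]
  have hbooltrans : ∀ p q r : Bool, (p = r) ↔ ((p = q) ↔ (q = r)) := by decide
  refine ⟨hnz, ?_⟩
  intro i j
  induction hconn i j with
  | refl => simp [mul_self_pos.mpr (hnz i)]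
  | @tail b c hab hbc ih =>
    rw [hprod i c, hbooltrans (σ i) (σ b) (σ c), ← ih, ← hedge b c hbc,
      hprod i b, hprod b c]
    exact stmt8_iff_aux _ _ _
end

section
/- Let F : R → ℝⁿ be continuous on a rectangle R = Πᵢ [aᵢ, bᵢ], with Fᵢ(x) < 0 whenever xᵢ = aᵢ and Fᵢ(x) > 0 whenever xᵢ = bᵢ. Then there exists x₀ in the interior of R with F(x₀) = 0. Moreover, if F = ∇E for a C² function E whose Hessian is positive definite throughout R, then x₀ is a local minimum of E and it is the unique zero of F in R. -/
/-!
Label each point `p` of the grid `{0, …, m}ⁿ`, placed affinely in the box, by the first index `i`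
with `Fᵢ > 0` at that point, or by `n` if `F ≤ 0` there. The sign conditions on the faces make
this labelling admissible for Sperner's lemma on the Kuhn triangulation of the grid, so some
simplex carries all `n + 1` labels. As `m → ∞` its vertices converge to a point where every `Fᵢ`
is both `≥ 0` and `≤ 0`.

Sperner's lemma is the door-to-door parity argument. A door is a facet whose labels are exactly
`0, …, n - 1`; a simplex has an odd number of doors iff it is fully labelled. Walking through a
door into the adjacent simplex pairs up the doors, except for those on the boundary of the grid,
and these are the fully labelled simplices of the induced labelling on the face `pₙ₋₁ = m`, one
dimension lower.

If `F = ∇E` with `∇²E` positive definite on the box, the directional derivative of `E` strictly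
increases along every segment in the box, so a zero of `F` is a strict minimum of `E` on the box
and the only zero there.
-/

open Finset Function Filter Topology

theorem Finset.card_modEq_card_filter_fixed_of_involution {α : Type*} [DecidableEq α]
    (s : Finset α) (f : α → α) (hmaps : ∀ a ∈ s, f a ∈ s) (hinv : ∀ a ∈ s, f (f a) = a) :
    #s ≡ #(s.filter fun a => f a = a) [MOD 2] := by
  let σ : Equiv.Perm s := Involutive.toPerm (fun a => ⟨f a, hmaps a a.2⟩)
    fun a => Subtype.ext (hinv a a.2)
  have hσ : σ ^ 2 ^ 1 = 1 := by
    ext a; exact hinv a a.2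
  have hfix : σ.supportᶜ.card = #(s.filter fun a => f a = a) := by
    rw [← card_map (Embedding.subtype _)]
    congr 1
    ext a
    simp only [mem_map, mem_compl, Equiv.Perm.mem_support, not_not, Embedding.subtype_apply,
      mem_filter]
    exact ⟨fun ⟨b, hb, hba⟩ => hba ▸ ⟨b.2, congrArg Subtype.val hb⟩,
      fun ⟨ha, hfa⟩ => ⟨⟨a, ha⟩, Subtype.ext hfa, rfl⟩⟩
  rw [← hfix, ← Fintype.card_coe s]
  exact (Equiv.Perm.card_compl_support_modEq hσ).symm

theorem finRotate_symm_zero {n : ℕ} : (finRotate (n + 1)).symm 0 = Fin.last n := by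
  rw [Equiv.symm_apply_eq, finRotate_last]

theorem finRotate_symm_succ {n : ℕ} (j : Fin n) :
    (finRotate (n + 1)).symm j.succ = j.castSucc := by
  rw [Equiv.symm_apply_eq, finRotate_apply, Fin.coeSucc_eq_succ]

section Door

variable {α : Type*} [Fintype α] [DecidableEq α]

/-- For a simplex with vertex set `α` and labels `f`, the facet opposite `a` is a door when it
carries every label except `b`. -/
def IsDoor (f : α → α) (b a : α) : Prop := (univ.erase a).image f = univ.erase b

instance (f : α → α) (b : α) : DecidablePred (IsDoor f b) :=
  fun _ => inferInstanceAs (Decidable (_ = _))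

variable {f : α → α} {a a' b : α}

theorem IsDoor.injOn (h : IsDoor f b a) : Set.InjOn f (univ.erase a) :=
  injOn_of_card_image_eq <| by
    rw [h, card_erase_of_mem (mem_univ _), card_erase_of_mem (mem_univ _)]

theorem IsDoor.congr_iff {g : α → α} (h : ∀ x, x ≠ a → f x = g x) :
    IsDoor f b a ↔ IsDoor g b a := by
  rw [IsDoor, IsDoor, image_congr fun x hx => h x (mem_erase.mp hx).1]

theorem isDoor_iff_of_injective (hf : Injective f) : IsDoor f b a ↔ f a = b := by
  rw [IsDoor, image_erase hf, image_univ_of_surjective (Finite.surjective_of_injective hf),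
    erase_inj _ (mem_univ _)]

theorem IsDoor.of_apply_eq (h : IsDoor f b a) (heq : f a' = f a) (hne : a' ≠ a) :
    IsDoor f b a' := by
  rw [IsDoor, ← h]
  ext y
  simp only [mem_image, mem_erase, mem_univ, and_true]
  constructor
  · rintro ⟨x, -, rfl⟩
    by_cases hxa : x = a
    · exact ⟨a', hne, hxa ▸ heq⟩
    · exact ⟨x, hxa, rfl⟩
  · rintro ⟨x, -, rfl⟩
    by_cases hxa : x = a'
    · exact ⟨a, hne.symm, hxa ▸ heq.symm⟩
    · exact ⟨x, hxa, rfl⟩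

theorem IsDoor.exists_ne_apply_eq (h : IsDoor f b a) (hf : ¬Surjective f) :
    ∃ a', a' ≠ a ∧ f a' = f a := by
  have hfa : f a ≠ b := by
    rintro rfl
    refine hf fun y => ?_
    by_cases hy : y = f a
    · exact ⟨a, hy.symm⟩
    · obtain ⟨x, -, hx⟩ := mem_image.mp (h ▸ mem_erase.mpr ⟨hy, mem_univ y⟩)
      exact ⟨x, hx⟩
  obtain ⟨a', ha', heq⟩ := mem_image.mp (h ▸ mem_erase.mpr ⟨hfa, mem_univ (f a)⟩)
  exact ⟨a', (mem_erase.mp ha').1, heq⟩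

theorem card_filter_isDoor_modEq (f : α → α) (b : α) :
    #(univ.filter (IsDoor f b)) ≡ if Surjective f then 1 else 0 [MOD 2] := by
  split_ifs with hf
  · have hinj := Finite.injective_iff_surjective.mpr hf
    obtain ⟨a, rfl⟩ := hf b
    rw [filter_congr fun x _ => (isDoor_iff_of_injective hinj).trans hinj.eq_iff,
      filter_eq' univ a, if_pos (mem_univ a), card_singleton]
  · obtain he | ⟨a, ha⟩ := (univ.filter (IsDoor f b)).eq_empty_or_nonempty
    · rw [he]; rfl
    have hdoor := (mem_filter.mp ha).2
    obtain ⟨a', hne, heq⟩ := hdoor.exists_ne_apply_eq hf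
    have hpair : univ.filter (IsDoor f b) = {a, a'} := by
      ext x
      simp only [mem_filter, mem_univ, true_and, mem_insert, mem_singleton]
      refine ⟨fun hx => ?_, ?_⟩
      · by_contra! hxa
        exact hne (hx.injOn (by simp [hxa.2.symm]) (by simp [hxa.1.symm]) heq)
      · rintro (rfl | rfl)
        exacts [hdoor, hdoor.of_apply_eq heq hne]
    rw [hpair, card_pair hne.symm]
    rfl

theorem isDoor_zero_iff {n : ℕ} {f : Fin (n + 1) → Fin (n + 1)} {b : Fin (n + 1)} :
    IsDoor f b 0 ↔ univ.image (f ∘ Fin.succ) = univ.erase b := by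
  rw [IsDoor, ← image_image, Fin.image_succ_univ, compl_singleton]

theorem isDoor_last_iff {n : ℕ} {f : Fin (n + 1) → Fin (n + 1)} {b : Fin (n + 1)} :
    IsDoor f b (Fin.last n) ↔ univ.image (f ∘ Fin.castSucc) = univ.erase b := by
  rw [IsDoor, ← image_image, Fin.image_castSucc, compl_singleton]

end Door

namespace Kuhn

/-- `(c, π)` is the simplex of the Kuhn triangulation of the cube `c + [0, 1]ⁿ` with vertices
`c, c + e (π 0), c + e (π 0) + e (π 1), …`. -/
abbrev Simplex (n : ℕ) := (Fin n → ℕ) × Equiv.Perm (Fin n)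

variable {n m : ℕ}

namespace Simplex

def vertex (s : Simplex n) (k : Fin (n + 1)) : Fin n → ℕ :=
  fun i => s.1 i + if (s.2.symm i : ℕ) < k then 1 else 0

theorem vertex_zero (s : Simplex n) : s.vertex 0 = s.1 := by
  ext i; simp [vertex]

theorem vertex_mem_Icc (s : Simplex n) (k : Fin (n + 1)) (i : Fin n) :
    s.vertex k i ∈ Set.Icc (s.1 i) (s.1 i + 1) := by
  unfold vertex; split_ifs <;> simp

def up (s : Simplex (n + 1)) : Simplex (n + 1) :=
  (update s.1 (s.2 0) (s.1 (s.2 0) + 1), s.2 * finRotate (n + 1))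

def down (s : Simplex (n + 1)) : Simplex (n + 1) :=
  (update s.1 (s.2 (Fin.last n)) (s.1 (s.2 (Fin.last n)) - 1), s.2 * (finRotate (n + 1))⁻¹)

def pivot (s : Simplex (n + 1)) (k : Fin (n + 2)) (h0 : k ≠ 0) (hl : k ≠ Fin.last (n + 1)) :
    Simplex (n + 1) :=
  (s.1, s.2 * Equiv.swap (k.pred h0) (k.castPred hl))

theorem up_perm_last (s : Simplex (n + 1)) : s.up.2 (Fin.last n) = s.2 0 := by
  simp [up]

theorem down_perm_zero (s : Simplex (n + 1)) : s.down.2 0 = s.2 (Fin.last n) := by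
  simp only [down, Equiv.Perm.mul_apply, Equiv.Perm.inv_def, finRotate_symm_zero]

theorem down_up (s : Simplex (n + 1)) : s.up.down = s := by
  ext i
  · rw [down, up_perm_last]
    rcases eq_or_ne i (s.2 0) with rfl | hi
    · simp [up]
    · simp [up, hi]
  · simp [down, up, mul_assoc]

theorem up_down (s : Simplex (n + 1)) (hs : 0 < s.1 (s.2 (Fin.last n))) : s.down.up = s := by
  ext i
  · rw [up, down_perm_zero]
    rcases eq_or_ne i (s.2 (Fin.last n)) with rfl | hi
    · simp only [down, update_self]; omega
    · simp [down, hi]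
  · simp [down, up, mul_assoc]

theorem pivot_pivot (s : Simplex (n + 1)) {k : Fin (n + 2)} (h0 : k ≠ 0)
    (hl : k ≠ Fin.last (n + 1)) : (s.pivot k h0 hl).pivot k h0 hl = s := by
  simp [pivot, mul_assoc]

theorem pivot_ne (s : Simplex (n + 1)) {k : Fin (n + 2)} (h0 : k ≠ 0)
    (hl : k ≠ Fin.last (n + 1)) : s.pivot k h0 hl ≠ s := by
  intro h
  have hswap : Equiv.swap (k.pred h0) (k.castPred hl) = 1 :=
    mul_left_cancel ((congrArg Prod.snd h).trans (mul_one s.2).symm)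
  have := congrArg (fun σ : Equiv.Perm (Fin (n + 1)) => (σ (k.pred h0)).val) hswap
  simp only [Equiv.swap_apply_left, Fin.coe_castPred, Equiv.Perm.one_apply, Fin.val_pred] at this
  have hk0 : (k : ℕ) ≠ 0 := Fin.val_ne_iff.mpr h0
  omega

theorem vertex_up (s : Simplex (n + 1)) (k : Fin (n + 1)) :
    s.up.vertex k.castSucc = s.vertex k.succ := by
  ext i
  have hsymm : s.up.2.symm i = (finRotate (n + 1)).symm (s.2.symm i) := by
    rw [up, Equiv.Perm.mul_def, Equiv.symm_trans_apply]
  simp only [vertex, hsymm, Fin.val_castSucc, Fin.val_succ]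
  rcases eq_or_ne (s.2.symm i) 0 with h | h
  · have hi : i = s.2 0 := by rw [← h, Equiv.apply_symm_apply]
    rw [h, finRotate_symm_zero, hi]
    simp [up, Nat.lt_succ_iff.mp k.isLt]
  · have hi : i ≠ s.2 0 := fun hc => h (by rw [hc, Equiv.symm_apply_apply])
    have h0 : (s.2.symm i : ℕ) ≠ 0 := Fin.val_ne_iff.mpr h
    simp only [up, update_of_ne hi, coe_finRotate_symm_of_ne_zero h]
    congr 1
    by_cases hc : (s.2.symm i : ℕ) - 1 < k
    · rw [if_pos hc, if_pos (by omega)]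
    · rw [if_neg hc, if_neg (by omega)]

theorem vertex_pivot (s : Simplex (n + 1)) {k j : Fin (n + 2)} (h0 : k ≠ 0)
    (hl : k ≠ Fin.last (n + 1)) (hj : j ≠ k) : (s.pivot k h0 hl).vertex j = s.vertex j := by
  ext i
  have hsymm : (s.pivot k h0 hl).2.symm i =
      Equiv.swap (k.pred h0) (k.castPred hl) (s.2.symm i) := by
    rw [pivot, Equiv.Perm.mul_def, Equiv.symm_trans_apply, Equiv.symm_swap]
  simp only [vertex, hsymm]
  congr 1
  have hk0 : (k : ℕ) ≠ 0 := Fin.val_ne_iff.mpr h0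
  have hjk : (j : ℕ) ≠ k := Fin.val_ne_iff.mpr hj
  have hpred : (k.pred h0 : ℕ) = k - 1 := rfl
  have hcast : (k.castPred hl : ℕ) = k := rfl
  rcases eq_or_ne (s.2.symm i) (k.pred h0) with h1 | h1
  · rw [h1, Equiv.swap_apply_left, hcast, hpred]
    split_ifs <;> omega
  rcases eq_or_ne (s.2.symm i) (k.castPred hl) with h2 | h2
  · rw [h2, Equiv.swap_apply_right, hpred, hcast]
    split_ifs <;> omega
  · rw [Equiv.swap_apply_of_ne_of_ne h1 h2]

end Simplex

open Simplex

def simplices (n m : ℕ) : Finset (Simplex n) := Fintype.piFinset (fun _ => range m) ×ˢ univ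

theorem mem_simplices {s : Simplex n} : s ∈ simplices n m ↔ ∀ i, s.1 i < m := by
  simp [simplices]

theorem vertex_le {s : Simplex n} (hs : s ∈ simplices n m) (k : Fin (n + 1)) (i : Fin n) :
    s.vertex k i ≤ m :=
  (s.vertex_mem_Icc k i).2.trans (mem_simplices.mp hs i)

theorem up_mem_simplices {s : Simplex (n + 1)} (hs : s ∈ simplices (n + 1) m)
    (h : s.1 (s.2 0) + 2 ≤ m) : s.up ∈ simplices (n + 1) m := by
  rw [mem_simplices] at hs ⊢
  intro i
  rcases eq_or_ne i (s.2 0) with rfl | hi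
  · simp only [up, update_self]; omega
  · simpa [up, hi] using hs i

theorem down_mem_simplices {s : Simplex (n + 1)} (hs : s ∈ simplices (n + 1) m) :
    s.down ∈ simplices (n + 1) m := by
  rw [mem_simplices] at hs ⊢
  intro i
  rcases eq_or_ne i (s.2 (Fin.last n)) with rfl | hi
  · simp only [down, update_self]; have := hs (s.2 (Fin.last n)); omega
  · simpa [down, hi] using hs i

def IsAdmissible (m : ℕ) (ℓ : (Fin n → ℕ) → Fin (n + 1)) : Prop :=
  ∀ p : Fin n → ℕ, (∀ i, p i ≤ m) →
    ∀ i, (p i = 0 → ℓ p ≠ i.castSucc) ∧ (p i = m → ℓ p ≤ i.castSucc)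

section Doors

variable {ℓ : (Fin (n + 1) → ℕ) → Fin (n + 2)}

def doors (m : ℕ) (ℓ : (Fin (n + 1) → ℕ) → Fin (n + 2)) :
    Finset (Simplex (n + 1) × Fin (n + 2)) :=
  (simplices (n + 1) m ×ˢ univ).filter fun t => IsDoor (ℓ ∘ t.1.vertex) (Fin.last _) t.2

theorem mem_doors {t : Simplex (n + 1) × Fin (n + 2)} :
    t ∈ doors m ℓ ↔ t.1 ∈ simplices (n + 1) m ∧ IsDoor (ℓ ∘ t.1.vertex) (Fin.last _) t.2 := by
  simp [doors]

theorem card_doors_modEq (ℓ : (Fin (n + 1) → ℕ) → Fin (n + 2)) :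
    #(doors m ℓ) ≡ #((simplices (n + 1) m).filter fun s => Surjective (ℓ ∘ s.vertex)) [MOD 2] := by
  rw [doors, card_filter, sum_product, card_filter]
  refine Nat.ModEq.sum fun s _ => ?_
  rw [← card_filter]
  exact card_filter_isDoor_modEq (ℓ ∘ s.vertex) (Fin.last _)

theorem isDoor_up_last_iff (s : Simplex (n + 1)) :
    IsDoor (ℓ ∘ s.up.vertex) (Fin.last _) (Fin.last _) ↔
      IsDoor (ℓ ∘ s.vertex) (Fin.last _) 0 := by
  rw [isDoor_last_iff, isDoor_zero_iff]
  congr! 2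
  ext k
  simp [vertex_up]

theorem isDoor_pivot_iff (s : Simplex (n + 1)) {k : Fin (n + 2)} (h0 : k ≠ 0)
    (hl : k ≠ Fin.last _) :
    IsDoor (ℓ ∘ (s.pivot k h0 hl).vertex) (Fin.last _) k ↔ IsDoor (ℓ ∘ s.vertex) (Fin.last _) k :=
  IsDoor.congr_iff fun j hj => by simp [vertex_pivot s h0 hl hj]

/-- Walking through the door `t.2` of `t.1` into the adjacent simplex, in which the same facet
is opposite the vertex `Fin.last _`, `0` or `t.2` respectively. Doors on the boundary of the grid
are left in place. -/
def cross (m : ℕ) (t : Simplex (n + 1) × Fin (n + 2)) : Simplex (n + 1) × Fin (n + 2) :=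
  if h0 : t.2 = 0 then
    if t.1.1 (t.1.2 0) + 2 ≤ m then (t.1.up, Fin.last _) else t
  else if hl : t.2 = Fin.last _ then
    if 0 < t.1.1 (t.1.2 (Fin.last n)) then (t.1.down, 0) else t
  else (t.1.pivot t.2 h0 hl, t.2)

section cross

variable (s : Simplex (n + 1))

theorem cross_zero_of_lt (h : s.1 (s.2 0) + 2 ≤ m) : cross m (s, 0) = (s.up, Fin.last _) := by
  simp [cross, h]

theorem cross_zero_of_ge (h : ¬s.1 (s.2 0) + 2 ≤ m) : cross m (s, 0) = (s, 0) := by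
  simp [cross, h]

theorem cross_last_of_pos (h : 0 < s.1 (s.2 (Fin.last n))) :
    cross m (s, Fin.last _) = (s.down, 0) := by
  simp [cross, h]

theorem cross_last_of_eq_zero (h : ¬0 < s.1 (s.2 (Fin.last n))) :
    cross m (s, Fin.last _) = (s, Fin.last _) := by
  simp [cross, h]

theorem cross_of_ne {k : Fin (n + 2)} (h0 : k ≠ 0) (hl : k ≠ Fin.last _) :
    cross m (s, k) = (s.pivot k h0 hl, k) := by
  simp [cross, h0, hl]

end cross

theorem cross_mem_doors {t : Simplex (n + 1) × Fin (n + 2)} (ht : t ∈ doors m ℓ) :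
    cross m t ∈ doors m ℓ := by
  obtain ⟨s, k⟩ := t
  obtain ⟨hs, hd⟩ := mem_doors.mp ht
  by_cases h0 : k = 0
  · subst h0
    by_cases h : s.1 (s.2 0) + 2 ≤ m
    · rw [cross_zero_of_lt s h, mem_doors]
      exact ⟨up_mem_simplices hs h, (isDoor_up_last_iff s).mpr hd⟩
    · rwa [cross_zero_of_ge s h]
  by_cases hl : k = Fin.last _
  · subst hl
    by_cases h : 0 < s.1 (s.2 (Fin.last n))
    · rw [cross_last_of_pos s h, mem_doors]
      refine ⟨down_mem_simplices hs, (isDoor_up_last_iff s.down).mp ?_⟩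
      rwa [up_down s h]
    · rwa [cross_last_of_eq_zero s h]
  · rw [cross_of_ne s h0 hl, mem_doors]
    exact ⟨mem_simplices.mpr fun i => mem_simplices.mp hs i, (isDoor_pivot_iff s h0 hl).mpr hd⟩

theorem cross_cross {s : Simplex (n + 1)} (hs : s ∈ simplices (n + 1) m) (k : Fin (n + 2)) :
    cross m (cross m (s, k)) = (s, k) := by
  by_cases h0 : k = 0
  · subst h0
    by_cases h : s.1 (s.2 0) + 2 ≤ m
    · have hpos : 0 < s.up.1 (s.up.2 (Fin.last n)) := by simp [up]
      rw [cross_zero_of_lt s h, cross_last_of_pos _ hpos, down_up]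
    · rw [cross_zero_of_ge s h, cross_zero_of_ge s h]
  by_cases hl : k = Fin.last _
  · subst hl
    by_cases h : 0 < s.1 (s.2 (Fin.last n))
    · have hlt : s.down.1 (s.down.2 0) + 2 ≤ m := by
        have := mem_simplices.mp hs (s.2 (Fin.last n))
        rw [down_perm_zero]
        simp only [down, update_self]
        omega
      rw [cross_last_of_pos s h, cross_zero_of_lt _ hlt, up_down s h]
    · rw [cross_last_of_eq_zero s h, cross_last_of_eq_zero s h]
  · rw [cross_of_ne s h0 hl, cross_of_ne _ h0 hl, pivot_pivot]

variable {s : Simplex (n + 1)}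

theorem pos_of_isDoor_last (hadm : IsAdmissible m ℓ) (hs : s ∈ simplices (n + 1) m)
    (hd : IsDoor (ℓ ∘ s.vertex) (Fin.last _) (Fin.last _)) : 0 < s.1 (s.2 (Fin.last n)) := by
  by_contra! h0
  have hmem : (s.2 (Fin.last n)).castSucc ∈ (univ.erase (Fin.last _)).image (ℓ ∘ s.vertex) := by
    rw [hd]; simp [Fin.castSucc_ne_last]
  obtain ⟨j, hj, hℓ⟩ := mem_image.mp hmem
  have hj' : (j : ℕ) ≤ n := Nat.lt_succ_iff.mp (Fin.val_lt_last (mem_erase.mp hj).1)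
  have hface : s.vertex j (s.2 (Fin.last n)) = 0 := by
    simp [Simplex.vertex, Nat.le_zero.mp h0, hj'.not_gt]
  exact (hadm _ (vertex_le hs j) _).1 hface hℓ

theorem perm_zero_eq_last_of_isDoor_zero (hadm : IsAdmissible m ℓ)
    (hs : s ∈ simplices (n + 1) m) (hd : IsDoor (ℓ ∘ s.vertex) (Fin.last _) 0)
    (h : s.1 (s.2 0) + 1 = m) : s.2 0 = Fin.last n := by
  have hmem : (Fin.last n).castSucc ∈ (univ.erase 0).image (ℓ ∘ s.vertex) := by
    rw [hd]; simp [Fin.castSucc_ne_last]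
  obtain ⟨j, hj, hℓ⟩ := mem_image.mp hmem
  have hj0 : 0 < (j : ℕ) := Fin.pos_iff_ne_zero.mpr (mem_erase.mp hj).1
  have hface : s.vertex j (s.2 0) = m := by simp [Simplex.vertex, hj0, h]
  have hle := (hadm _ (vertex_le hs j) _).2 hface
  rw [comp_apply] at hℓ
  rw [hℓ, Fin.castSucc_le_castSucc_iff] at hle
  exact le_antisymm (Fin.le_last _) hle

end Doors

def extendPerm (π : Equiv.Perm (Fin n)) : Equiv.Perm (Fin (n + 1)) :=
  (finRotate (n + 1))⁻¹ * Equiv.Perm.decomposeFin.symm (0, π)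

section extendPerm

variable (π : Equiv.Perm (Fin n))

@[simp] theorem extendPerm_zero : extendPerm π 0 = Fin.last n := by
  simp only [extendPerm, Equiv.Perm.mul_apply, Equiv.Perm.inv_def,
    Equiv.Perm.decomposeFin_symm_apply_zero, finRotate_symm_zero]

@[simp] theorem extendPerm_succ (j : Fin n) : extendPerm π j.succ = (π j).castSucc := by
  simp only [extendPerm, Equiv.Perm.mul_apply, Equiv.Perm.inv_def,
    Equiv.Perm.decomposeFin_symm_apply_succ, Equiv.swap_self, Equiv.refl_apply,
    finRotate_symm_succ]

@[simp] theorem extendPerm_symm_last : (extendPerm π).symm (Fin.last n) = 0 := by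
  rw [Equiv.symm_apply_eq, extendPerm_zero]

@[simp] theorem extendPerm_symm_castSucc (i : Fin n) :
    (extendPerm π).symm i.castSucc = (π.symm i).succ := by
  rw [Equiv.symm_apply_eq, extendPerm_succ, Equiv.apply_symm_apply]

end extendPerm

theorem extendPerm_injective : Injective (extendPerm (n := n)) := fun π π' h =>
  Equiv.ext fun j => Fin.castSucc_injective _ <| by
    simpa using congrArg (fun σ : Equiv.Perm (Fin (n + 1)) => σ j.succ) h

theorem exists_extendPerm_eq {σ : Equiv.Perm (Fin (n + 1))} (h : σ 0 = Fin.last n) :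
    ∃ π, extendPerm π = σ := by
  set τ := finRotate (n + 1) * σ
  have hτ : τ = Equiv.Perm.decomposeFin.symm (Equiv.Perm.decomposeFin τ) :=
    (Equiv.symm_apply_apply _ _).symm
  have hp : (Equiv.Perm.decomposeFin τ).1 = 0 := by
    rw [← Equiv.Perm.decomposeFin_symm_apply_zero (Equiv.Perm.decomposeFin τ).1
      (Equiv.Perm.decomposeFin τ).2, Prod.mk.eta, ← hτ]
    simp [τ, h]
  refine ⟨(Equiv.Perm.decomposeFin τ).2, ?_⟩
  rw [extendPerm, ← hp, Prod.mk.eta, ← hτ, ← mul_assoc, inv_mul_cancel, one_mul]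

section Restrict

variable {ℓ : (Fin (n + 1) → ℕ) → Fin (n + 2)}

theorem snoc_le {p : Fin n → ℕ} (hp : ∀ i, p i ≤ m) (i : Fin (n + 1)) :
    (Fin.snoc p m : Fin (n + 1) → ℕ) i ≤ m := by
  induction i using Fin.lastCases with
  | last => simp
  | cast i => simpa using hp i

/-- The labelling induced on the face `p (Fin.last n) = m`. Admissibility keeps the label
`Fin.last _` off that face, so the value `0` it is sent to is never used. -/
def restrictLabel (ℓ : (Fin (n + 1) → ℕ) → Fin (n + 2)) (m : ℕ) (p : Fin n → ℕ) :
    Fin (n + 1) :=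
  Fin.lastCases 0 id (ℓ (Fin.snoc p m))

theorem castSucc_restrictLabel (hadm : IsAdmissible m ℓ) {p : Fin n → ℕ} (hp : ∀ i, p i ≤ m) :
    (restrictLabel ℓ m p).castSucc = ℓ (Fin.snoc p m) := by
  have hle := (hadm _ (snoc_le hp) (Fin.last n)).2 (Fin.snoc_last _ _)
  obtain ⟨i, hi⟩ := Fin.exists_castSucc_eq.mpr (hle.trans_lt (Fin.castSucc_lt_last _)).ne
  simp [restrictLabel, ← hi]

theorem IsAdmissible.restrictLabel (hadm : IsAdmissible m ℓ) :
    IsAdmissible m (restrictLabel ℓ m) := by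
  intro p hp i
  have hsnoc := hadm _ (snoc_le hp) i.castSucc
  simpa only [Fin.snoc_castSucc, ← castSucc_restrictLabel hadm hp, ne_eq, Fin.castSucc_inj,
    Fin.castSucc_le_castSucc_iff] using hsnoc

def Simplex.extend (m : ℕ) (s : Simplex n) : Simplex (n + 1) :=
  (Fin.snoc s.1 (m - 1), extendPerm s.2)

theorem Simplex.vertex_extend_succ (hm : 0 < m) (s : Simplex n) (j : Fin (n + 1)) :
    (s.extend m).vertex j.succ = Fin.snoc (s.vertex j) m := by
  ext i
  induction i using Fin.lastCases with
  | last => simp [vertex, Simplex.extend]; omega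
  | cast i => simp [vertex, Simplex.extend]

theorem extend_mem_simplices (hm : 0 < m) {s : Simplex n} (hs : s ∈ simplices n m) :
    s.extend m ∈ simplices (n + 1) m := by
  rw [mem_simplices] at hs ⊢
  intro i
  induction i using Fin.lastCases with
  | last => simp [Simplex.extend]; omega
  | cast i => simpa [Simplex.extend] using hs i

theorem extend_injective : Injective (Simplex.extend (n := n) m) := fun s s' h => by
  obtain ⟨h1, h2⟩ := Prod.ext_iff.mp h
  refine Prod.ext (funext fun i => ?_) (extendPerm_injective h2)
  simpa [Simplex.extend] using congrFun h1 i.castSucc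

theorem isDoor_extend_zero_iff (hm : 0 < m) (hadm : IsAdmissible m ℓ) {s : Simplex n}
    (hs : s ∈ simplices n m) :
    IsDoor (ℓ ∘ (s.extend m).vertex) (Fin.last _) 0 ↔
      Surjective (restrictLabel ℓ m ∘ s.vertex) := by
  have hcomp : (ℓ ∘ (s.extend m).vertex) ∘ Fin.succ =
      Fin.castSucc ∘ restrictLabel ℓ m ∘ s.vertex := by
    ext1 j
    simp [vertex_extend_succ hm, castSucc_restrictLabel hadm (vertex_le hs j)]
  rw [isDoor_zero_iff, hcomp, ← image_image, ← compl_singleton, ← Fin.image_castSucc,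
    (image_injective (Fin.castSucc_injective _)).eq_iff]
  simp [eq_univ_iff_forall, Surjective]

theorem cross_extend_zero (hm : 0 < m) (s : Simplex n) :
    cross m (s.extend m, 0) = (s.extend m, 0) :=
  cross_zero_of_ge _ (by simp [Simplex.extend]; omega)

theorem exists_extend_of_cross_eq_self (hadm : IsAdmissible m ℓ)
    {t : Simplex (n + 1) × Fin (n + 2)} (ht : t ∈ doors m ℓ) (hfix : cross m t = t) :
    ∃ s ∈ simplices n m, t = (s.extend m, 0) := by
  obtain ⟨s, k⟩ := t
  obtain ⟨hs, hd⟩ : s ∈ simplices (n + 1) m ∧ IsDoor (ℓ ∘ s.vertex) (Fin.last _) k :=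
    mem_doors.mp ht
  by_cases h0 : k = 0
  · subst h0
    by_cases h : s.1 (s.2 0) + 2 ≤ m
    · simp [cross_zero_of_lt s h] at hfix
    have hm : s.1 (s.2 0) + 1 = m := by have := mem_simplices.mp hs (s.2 0); omega
    have hlast := perm_zero_eq_last_of_isDoor_zero hadm hs hd hm
    obtain ⟨π, hπ⟩ := exists_extendPerm_eq hlast
    refine ⟨(Fin.init s.1, π), mem_simplices.mpr fun i => mem_simplices.mp hs _, ?_⟩
    have hbase : m - 1 = s.1 (Fin.last n) := by rw [← hlast]; omega
    simp only [Simplex.extend, hπ, hbase, Fin.snoc_init_self]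
  by_cases hl : k = Fin.last _
  · subst hl
    simp [cross_last_of_pos s (pos_of_isDoor_last hadm hs hd)] at hfix
  · exact absurd (congrArg Prod.fst ((cross_of_ne s h0 hl).symm.trans hfix)) (pivot_ne s h0 hl)

theorem card_filter_cross_eq_self (hm : 0 < m) (hadm : IsAdmissible m ℓ) :
    #((doors m ℓ).filter fun t => cross m t = t) =
      #((simplices n m).filter fun s => Surjective (restrictLabel ℓ m ∘ s.vertex)) := by
  symm
  refine card_bij (fun s _ => (s.extend m, 0)) (fun s hs => ?_) (fun s _ s' _ h => ?_)
    fun t ht => ?_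
  · obtain ⟨hs, hfull⟩ := mem_filter.mp hs
    exact mem_filter.mpr ⟨mem_doors.mpr ⟨extend_mem_simplices hm hs,
      (isDoor_extend_zero_iff hm hadm hs).mpr hfull⟩, cross_extend_zero hm s⟩
  · exact extend_injective (congrArg Prod.fst h)
  · obtain ⟨hdoor, hfix⟩ := mem_filter.mp ht
    obtain ⟨s, hs, rfl⟩ := exists_extend_of_cross_eq_self hadm hdoor hfix
    exact ⟨s, mem_filter.mpr ⟨hs, (isDoor_extend_zero_iff hm hadm hs).mp
      (mem_doors.mp hdoor).2⟩, rfl⟩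

end Restrict

theorem odd_card_full (hm : 0 < m) {ℓ : (Fin n → ℕ) → Fin (n + 1)} (hadm : IsAdmissible m ℓ) :
    Odd #((simplices n m).filter fun s => Surjective (ℓ ∘ s.vertex)) := by
  induction n with
  | zero =>
    rw [filter_true_of_mem fun s _ k => ⟨0, Subsingleton.elim (α := Fin 1) _ _⟩]
    simp [simplices]
  | succ n ih =>
    have hinv := card_modEq_card_filter_fixed_of_involution (doors m ℓ) (cross m)
      (fun t => cross_mem_doors) fun t ht => cross_cross (mem_doors.mp ht).1 t.2
    rw [card_filter_cross_eq_self hm hadm] at hinv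
    have hodd : _ ≡ 1 [MOD 2] := Nat.odd_iff.mp (ih hadm.restrictLabel)
    exact Nat.odd_iff.mpr (((card_doors_modEq ℓ).symm.trans hinv).trans hodd)

theorem exists_full (hm : 0 < m) {ℓ : (Fin n → ℕ) → Fin (n + 1)} (hadm : IsAdmissible m ℓ) :
    ∃ s ∈ simplices n m, Surjective (ℓ ∘ s.vertex) := by
  obtain ⟨s, hs⟩ := card_pos.mp (odd_card_full hm hadm).pos
  exact ⟨s, (mem_filter.mp hs).1, (mem_filter.mp hs).2⟩

end Kuhn

theorem IsCompact.exists_eq_zero_of_forall_near {X ι : Type*} [MetricSpace X] {K : Set X}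
    (hK : IsCompact K) {F : X → ι → ℝ} (hF : ContinuousOn F K)
    (h : ∀ ε > 0, ∃ x ∈ K, (∀ i, ∃ y ∈ K, dist x y < ε ∧ 0 ≤ F y i) ∧
      ∃ y ∈ K, dist x y < ε ∧ ∀ i, F y i ≤ 0) :
    ∃ x ∈ K, F x = 0 := by
  choose x hxK hnear using fun k : ℕ => h (1 / (k + 1)) Nat.one_div_pos_of_nat
  choose y hyK hy hpos using fun k => (hnear k).1
  choose z hzK hz hnonpos using fun k => (hnear k).2
  obtain ⟨x₀, hx₀, φ, hφ, hxφ⟩ := hK.tendsto_subseq hxK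
  have hlim : ∀ w : ℕ → X, (∀ k, w k ∈ K) → (∀ k, dist (x k) (w k) < 1 / (k + 1)) →
      Tendsto (fun k => F (w (φ k))) atTop (𝓝 (F x₀)) := by
    intro w hwK hw
    have hdist : Tendsto (fun k => dist (x (φ k)) (w (φ k))) atTop (𝓝 0) :=
      squeeze_zero (fun _ => dist_nonneg) (fun k => (hw (φ k)).le)
        (tendsto_one_div_add_atTop_nhds_zero_nat.comp hφ.tendsto_atTop)
    refine (hF x₀ hx₀).tendsto.comp (tendsto_nhdsWithin_iff.mpr ⟨?_, .of_forall fun k => hwK _⟩)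
    exact hxφ.congr_dist hdist
  refine ⟨x₀, hx₀, funext fun i => le_antisymm ?_ ?_⟩
  · exact le_of_tendsto' (tendsto_pi_nhds.mp (hlim z hzK hz) i) fun k => hnonpos _ i
  · exact ge_of_tendsto' (tendsto_pi_nhds.mp (hlim (y · i) (hyK · i) (hy · i)) i) fun k => hpos _ i

open Set

section Miranda

variable {n : ℕ}

noncomputable def firstPos (v : Fin n → ℝ) : Fin (n + 1) :=
  if h : ∃ i, 0 < v i then (Fin.find _ h).castSucc else Fin.last n

theorem pos_of_firstPos_eq {v : Fin n → ℝ} {i : Fin n} (h : firstPos v = i.castSucc) : 0 < v i := by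
  unfold firstPos at h
  split_ifs at h with hex
  · exact Fin.castSucc_injective _ h ▸ Fin.find_spec hex
  · exact absurd h.symm (Fin.castSucc_lt_last i).ne

theorem nonpos_of_firstPos_eq_last {v : Fin n → ℝ} (h : firstPos v = Fin.last n) (i : Fin n) :
    v i ≤ 0 := by
  unfold firstPos at h
  split_ifs at h with hex
  · exact absurd h (Fin.castSucc_lt_last _).ne
  · exact not_lt.mp fun hi => hex ⟨i, hi⟩

theorem firstPos_le {v : Fin n → ℝ} {i : Fin n} (h : 0 < v i) : firstPos v ≤ i.castSucc := by
  rw [firstPos, dif_pos ⟨i, h⟩, Fin.castSucc_le_castSucc_iff]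
  exact Fin.find_le_of_pos _ h

noncomputable def gridPoint (a b : Fin n → ℝ) (m : ℕ) (p : Fin n → ℕ) : Fin n → ℝ :=
  fun i => a i + p i / m * (b i - a i)

variable {a b : Fin n → ℝ} {m : ℕ}

theorem gridPoint_mem_Icc (hab : a ≤ b) {p : Fin n → ℕ} (hp : ∀ i, p i ≤ m) :
    gridPoint a b m p ∈ Icc a b := by
  have hba i : 0 ≤ b i - a i := sub_nonneg.mpr (hab i)
  have ht0 i : 0 ≤ (p i / m : ℝ) := by positivity
  have ht1 i : (p i / m : ℝ) ≤ 1 := div_le_one_of_le₀ (by exact_mod_cast hp i) m.cast_nonneg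
  refine ⟨fun i => ?_, fun i => ?_⟩ <;> simp only [gridPoint]
  · linarith [mul_nonneg (ht0 i) (hba i)]
  · linarith [mul_le_mul_of_nonneg_right (ht1 i) (hba i)]

theorem dist_gridPoint_le (hab : a ≤ b) {p q : Fin n → ℕ}
    (hpq : ∀ i, q i ∈ Set.Icc (p i) (p i + 1)) :
    dist (gridPoint a b m p) (gridPoint a b m q) ≤ dist a b / m := by
  refine (dist_pi_le_iff (div_nonneg dist_nonneg m.cast_nonneg)).mpr fun i => ?_
  have hba : 0 ≤ b i - a i := sub_nonneg.mpr (hab i)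
  have hq0 : (0 : ℝ) ≤ q i - p i := sub_nonneg.mpr (by exact_mod_cast (hpq i).1)
  have hq1 : (q i : ℝ) - p i ≤ 1 := by
    have : (q i : ℝ) ≤ p i + 1 := by exact_mod_cast (hpq i).2
    linarith
  have hdiff : gridPoint a b m q i - gridPoint a b m p i = (q i - p i) / m * (b i - a i) := by
    simp only [gridPoint]; ring
  have hab_i : b i - a i ≤ dist a b := by
    rw [← abs_of_nonneg hba, abs_sub_comm, ← Real.dist_eq]
    exact dist_le_pi_dist a b i
  calc dist (gridPoint a b m p i) (gridPoint a b m q i)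
      = (q i - p i) / m * (b i - a i) := by
        rw [dist_comm, Real.dist_eq, hdiff,
          abs_of_nonneg (mul_nonneg (div_nonneg hq0 m.cast_nonneg) hba)]
    _ ≤ 1 / m * dist a b := by gcongr
    _ = dist a b / m := one_div_mul_eq_div _ _

variable {F : (Fin n → ℝ) → Fin n → ℝ}

theorem isAdmissible_firstPos_gridPoint (hab : a ≤ b) (hm : 0 < m)
    (hFa : ∀ x ∈ Icc a b, ∀ i, x i = a i → F x i ≤ 0)
    (hFb : ∀ x ∈ Icc a b, ∀ i, x i = b i → 0 < F x i) :
    Kuhn.IsAdmissible m fun p => firstPos (F (gridPoint a b m p)) := by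
  intro p hp i
  have hmem := gridPoint_mem_Icc hab hp
  refine ⟨fun h0 hℓ => ?_, fun hpm => firstPos_le (hFb _ hmem i ?_)⟩
  · exact (hFa _ hmem i (by simp [gridPoint, h0])).not_gt (pos_of_firstPos_eq hℓ)
  · simp [gridPoint, hpm, hm.ne']

theorem exists_near_pos_and_nonpos (hab : a ≤ b)
    (hFa : ∀ x ∈ Icc a b, ∀ i, x i = a i → F x i ≤ 0)
    (hFb : ∀ x ∈ Icc a b, ∀ i, x i = b i → 0 < F x i) {ε : ℝ} (hε : 0 < ε) :
    ∃ x ∈ Icc a b, (∀ i, ∃ y ∈ Icc a b, dist x y < ε ∧ 0 ≤ F y i) ∧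
      ∃ y ∈ Icc a b, dist x y < ε ∧ ∀ i, F y i ≤ 0 := by
  obtain ⟨m, hmε⟩ := exists_nat_gt (dist a b / ε)
  have hm : 0 < m := by exact_mod_cast (div_nonneg dist_nonneg hε.le).trans_lt hmε
  have hmesh : dist a b / m < ε := by
    rw [div_lt_iff₀ hε] at hmε
    rw [div_lt_iff₀ (by positivity)]
    linarith
  obtain ⟨s, hs, hfull⟩ := Kuhn.exists_full hm (isAdmissible_firstPos_gridPoint hab hm hFa hFb)
  have hnear : ∀ k, dist (gridPoint a b m (s.vertex 0)) (gridPoint a b m (s.vertex k)) < ε :=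
    fun k => (dist_gridPoint_le hab fun i => by
      simpa [Kuhn.Simplex.vertex_zero] using s.vertex_mem_Icc k i).trans_lt hmesh
  have hmem : ∀ k, gridPoint a b m (s.vertex k) ∈ Icc a b := fun k =>
    gridPoint_mem_Icc hab (Kuhn.vertex_le hs k)
  refine ⟨_, hmem 0, fun i => ?_, ?_⟩
  · obtain ⟨k, hk⟩ := hfull i.castSucc
    exact ⟨_, hmem k, hnear k, (pos_of_firstPos_eq hk).le⟩
  · obtain ⟨k, hk⟩ := hfull (Fin.last n)
    exact ⟨_, hmem k, hnear k, nonpos_of_firstPos_eq_last hk⟩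

theorem exists_eq_zero_of_miranda (hab : a ≤ b) (hF : ContinuousOn F (Icc a b))
    (hFa : ∀ x ∈ Icc a b, ∀ i, x i = a i → F x i ≤ 0)
    (hFb : ∀ x ∈ Icc a b, ∀ i, x i = b i → 0 < F x i) :
    ∃ x ∈ Icc a b, F x = 0 :=
  isCompact_Icc.exists_eq_zero_of_forall_near hF fun _ hε =>
    exists_near_pos_and_nonpos hab hFa hFb hε

theorem mem_Ioo_of_eq_zero (hFa : ∀ x ∈ Icc a b, ∀ i, x i = a i → F x i < 0)
    (hFb : ∀ x ∈ Icc a b, ∀ i, x i = b i → 0 < F x i) {x : Fin n → ℝ} (hx : x ∈ Icc a b)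
    (hFx : F x = 0) (i : Fin n) : x i ∈ Ioo (a i) (b i) :=
  ⟨(hx.1 i).lt_of_ne fun h => (hFa x hx i h.symm).ne (by simp [hFx]),
    (hx.2 i).lt_of_ne fun h => (hFb x hx i h).ne' (by simp [hFx])⟩

end Miranda

section StrictConvexity

variable {V : Type*} [NormedAddCommGroup V] [NormedSpace ℝ V] {E : V → ℝ} {S : Set V} {x y : V}

theorem continuous_comp_add_smul (hE : Continuous E) (x v : V) :
    Continuous fun t : ℝ => E (x + t • v) :=
  hE.comp (continuous_const.add (continuous_id.smul continuous_const))

theorem hasDerivAt_comp_add_smul (hE : Differentiable ℝ E) (x v : V) (t : ℝ) :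
    HasDerivAt (fun t : ℝ => E (x + t • v)) (fderiv ℝ E (x + t • v) v) t := by
  have hline : HasDerivAt (fun t : ℝ => x + t • v) v t := by
    simpa using ((hasDerivAt_id t).smul_const v).const_add x
  exact (hE _).hasFDerivAt.comp_hasDerivAt t hline

theorem strictMonoOn_fderiv_segment (hE : ContDiff ℝ 2 E) (hS : Convex ℝ S)
    (hpos : ∀ z ∈ S, ∀ v, v ≠ 0 → 0 < fderiv ℝ (fun w => fderiv ℝ E w v) z v)
    (hx : x ∈ S) (hy : y ∈ S) (hxy : x ≠ y) :
    StrictMonoOn (fun t : ℝ => fderiv ℝ E (x + t • (y - x)) (y - x)) (Icc 0 1) := by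
  have hD : ContDiff ℝ 1 fun z => fderiv ℝ E z (y - x) :=
    (hE.fderiv_right (by norm_num)).clm_apply contDiff_const
  refine strictMonoOn_of_deriv_pos (convex_Icc 0 1) ?_ fun t ht => ?_
  · exact (continuous_comp_add_smul hD.continuous x (y - x)).continuousOn
  · rw [interior_Icc] at ht
    rw [(hasDerivAt_comp_add_smul (hD.differentiable one_ne_zero) x (y - x) t).deriv]
    exact hpos _ (hS.add_smul_sub_mem hx hy (Ioo_subset_Icc_self ht)) _ (sub_ne_zero.mpr hxy.symm)

theorem lt_of_fderiv_eq_zero (hE : ContDiff ℝ 2 E) (hS : Convex ℝ S)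
    (hpos : ∀ z ∈ S, ∀ v, v ≠ 0 → 0 < fderiv ℝ (fun w => fderiv ℝ E w v) z v)
    (hx : x ∈ S) (hy : y ∈ S) (hxy : x ≠ y) (hcrit : fderiv ℝ E x = 0) : E x < E y := by
  have hdiff := hE.differentiable (by norm_num)
  obtain ⟨ξ, hξ, hslope⟩ := exists_hasDerivAt_eq_slope (fun t : ℝ => E (x + t • (y - x)))
    (fun t => fderiv ℝ E (x + t • (y - x)) (y - x)) one_pos
    (continuous_comp_add_smul hdiff.continuous x (y - x)).continuousOn
    fun t _ => hasDerivAt_comp_add_smul hdiff x (y - x) t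
  have hlt := strictMonoOn_fderiv_segment hE hS hpos hx hy hxy (left_mem_Icc.mpr zero_le_one)
    (Ioo_subset_Icc_self hξ) hξ.1
  simp only [zero_smul, add_zero, hcrit, zero_apply, hslope, one_smul, add_sub_cancel, sub_zero,
    div_one] at hlt
  linarith

theorem eq_of_fderiv_eq_zero (hE : ContDiff ℝ 2 E) (hS : Convex ℝ S)
    (hpos : ∀ z ∈ S, ∀ v, v ≠ 0 → 0 < fderiv ℝ (fun w => fderiv ℝ E w v) z v)
    (hx : x ∈ S) (hy : y ∈ S) (hcx : fderiv ℝ E x = 0) (hcy : fderiv ℝ E y = 0) : x = y := by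
  by_contra hxy
  have hlt := strictMonoOn_fderiv_segment hE hS hpos hx hy hxy (left_mem_Icc.mpr zero_le_one)
    (right_mem_Icc.mpr zero_le_one) one_pos
  simp [hcx, hcy] at hlt

theorem isLocalMin_of_fderiv_eq_zero (hE : ContDiff ℝ 2 E) (hS : Convex ℝ S)
    (hpos : ∀ z ∈ S, ∀ v, v ≠ 0 → 0 < fderiv ℝ (fun w => fderiv ℝ E w v) z v)
    (hSx : S ∈ 𝓝 x) (hcrit : fderiv ℝ E x = 0) : IsLocalMin E x := by
  filter_upwards [hSx] with y hy
  rcases eq_or_ne x y with rfl | hxy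
  · exact le_rfl
  · exact (lt_of_fderiv_eq_zero hE hS hpos (mem_of_mem_nhds hSx) hy hxy hcrit).le

end StrictConvexity

theorem fderiv_eq_zero_of_partials_eq_zero {n : ℕ} {E : (Fin n → ℝ) → ℝ} {x : Fin n → ℝ}
    (h : ∀ i, fderiv ℝ E x (Pi.single i 1) = 0) : fderiv ℝ E x = 0 :=
  ContinuousLinearMap.coe_injective ((Pi.basisFun ℝ (Fin n)).ext fun i => by simpa using h i)

/-- Poincaré–Miranda plus convexity: if `F` is continuous on the
box `R = Πᵢ [aᵢ, bᵢ]` with `Fᵢ < 0` on the face `xᵢ = aᵢ` and `Fᵢ > 0` on the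
face `xᵢ = bᵢ`, then `F` has a zero `x₀` in the interior of `R`; moreover, if
`F = ∇E` for a `C²` function `E` whose Hessian is positive definite throughout
`R`, then `x₀` is a local minimum of `E` and the unique zero of `F` in `R`. -/
theorem stmt13 (n : ℕ) (a b : Fin n → ℝ) (hab : ∀ i, a i < b i)
    (F : (Fin n → ℝ) → (Fin n → ℝ))
    (hF : ContinuousOn F (Set.Icc a b))
    (hFa : ∀ x ∈ Set.Icc a b, ∀ i, x i = a i → F x i < 0)
    (hFb : ∀ x ∈ Set.Icc a b, ∀ i, x i = b i → 0 < F x i) :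
    (∃ x₀, (∀ i, x₀ i ∈ Set.Ioo (a i) (b i)) ∧ F x₀ = 0) ∧
    (∀ E : (Fin n → ℝ) → ℝ, ContDiff ℝ 2 E →
      (∀ x i, fderiv ℝ E x (Pi.single i 1) = F x i) →
      (∀ x ∈ Set.Icc a b, ∀ v : Fin n → ℝ, v ≠ 0 →
        0 < fderiv ℝ (fun y => fderiv ℝ E y v) x v) →
      ∃ x₀, (∀ i, x₀ i ∈ Set.Ioo (a i) (b i)) ∧ F x₀ = 0 ∧
        IsLocalMin E x₀ ∧ ∀ y ∈ Set.Icc a b, F y = 0 → y = x₀) := by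
  obtain ⟨x₀, hx₀, hF₀⟩ := exists_eq_zero_of_miranda (fun i => (hab i).le) hF
    (fun x hx i hi => (hFa x hx i hi).le) hFb
  have hint := mem_Ioo_of_eq_zero hFa hFb hx₀ hF₀
  refine ⟨⟨x₀, hint, hF₀⟩, fun E hE hgrad hpos => ?_⟩
  have hcrit : ∀ z, F z = 0 → fderiv ℝ E z = 0 := fun z hz =>
    fderiv_eq_zero_of_partials_eq_zero fun i => by rw [hgrad, hz, Pi.zero_apply]
  have hnhds : Icc a b ∈ 𝓝 x₀ := by
    rw [← pi_univ_Icc]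
    exact set_pi_mem_nhds finite_univ fun i _ => Icc_mem_nhds (hint i).1 (hint i).2
  refine ⟨x₀, hint, hF₀, isLocalMin_of_fderiv_eq_zero hE (convex_Icc a b) hpos hnhds
    (hcrit x₀ hF₀), fun y hy hFy => ?_⟩
  exact (eq_of_fderiv_eq_zero hE (convex_Icc a b) hpos hx₀ hy (hcrit x₀ hF₀) (hcrit y hFy)).symm
end

section
/- If G is balanced with at least one negative edge between the two parts (V₂ nonempty and connected to V₁), then for the global minimum x of E with κ > 0, coordinates in V₁ are positive and coordinates in V₂ are negative (after possibly replacing x by -x); in particular the global minimum is never a constant vector c·(1,...,1) with c ≠ 0 unless V₂ = ∅. -/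
open Finset

private lemma abs_sub_sq_le' (a b : ℝ) : (|a| - |b|) ^ 2 ≤ (a - b) ^ 2 := by
  nlinarith [le_abs_self (a * b), abs_mul a b, sq_abs a, sq_abs b]

private lemma sub_sq_le_abs_add' (a b : ℝ) : (a - b) ^ 2 ≤ (|a| + |b|) ^ 2 := by
  nlinarith [neg_abs_le (a * b), abs_mul a b, sq_abs a, sq_abs b]

private lemma mul_nonneg_of_eq' (a b : ℝ) (h : (|a| - |b|) ^ 2 = (a - b) ^ 2) : 0 ≤ a * b := by
  nlinarith [abs_mul a b, sq_abs a, sq_abs b, abs_nonneg (a * b)]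

private lemma mul_nonpos_of_eq' (a b : ℝ) (h : (|a| + |b|) ^ 2 = (a - b) ^ 2) : a * b ≤ 0 := by
  nlinarith [abs_mul a b, sq_abs a, sq_abs b, abs_nonneg (a * b)]

private lemma quad_update' {n : ℕ} (γ : Fin n → Fin n → ℝ)
    (hsym : ∀ i j, γ i j = γ j i) (hdiag : ∀ i, γ i i = 0)
    (v : Fin n → ℝ) (k : Fin n) (a : ℝ) :
    ∑ i, ∑ j, γ i j * (Function.update v k a i - Function.update v k a j) ^ 2
      = (∑ i, ∑ j, γ i j * (v i - v j) ^ 2)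
        + 2 * ∑ j, γ k j * ((a - v j) ^ 2 - (v k - v j) ^ 2) := by
  classical
  set z := Function.update v k a with hzdef
  have hzk : z k = a := Function.update_self k a v
  have hzo : ∀ i, i ≠ k → z i = v i := fun i hi => Function.update_of_ne hi a v
  set D : Fin n → Fin n → ℝ := fun i j => γ i j * ((z i - z j) ^ 2 - (v i - v j) ^ 2) with hD
  have hsplit : ∑ i, ∑ j, γ i j * (z i - z j) ^ 2
      = (∑ i, ∑ j, γ i j * (v i - v j) ^ 2) + ∑ i, ∑ j, D i j := by
    rw [← Finset.sum_add_distrib]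
    refine Finset.sum_congr rfl fun i _ => ?_
    rw [← Finset.sum_add_distrib]
    refine Finset.sum_congr rfl fun j _ => ?_
    simp only [hD]; ring
  rw [hsplit]
  congr 1
  have hFk : ∑ j, D k j = ∑ j, γ k j * ((a - v j) ^ 2 - (v k - v j) ^ 2) := by
    refine Finset.sum_congr rfl fun j _ => ?_
    by_cases hj : j = k
    · subst hj; simp [hD, hdiag]
    · simp only [hD, hzk, hzo j hj]
  have hFi : ∀ i, i ≠ k → ∑ j, D i j = γ k i * ((a - v i) ^ 2 - (v k - v i) ^ 2) := by
    intro i hi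
    rw [Finset.sum_eq_single_of_mem k (Finset.mem_univ k)]
    · simp only [hD, hzo i hi, hzk]
      rw [hsym i k]
      ring
    · intro j _ hj
      simp only [hD, hzo i hi, hzo j hj]
      ring
  have houter : ∑ i, ∑ j, D i j = (∑ j, D k j) + ∑ i ∈ Finset.univ.erase k, ∑ j, D i j :=
    (Finset.add_sum_erase _ (fun i => ∑ j, D i j) (Finset.mem_univ k)).symm
  rw [houter, hFk]
  have h2 : ∑ i ∈ Finset.univ.erase k, ∑ j, D i j
      = ∑ i ∈ Finset.univ.erase k, γ k i * ((a - v i) ^ 2 - (v k - v i) ^ 2) := by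
    refine Finset.sum_congr rfl fun i hi => ?_
    exact hFi i (Finset.ne_of_mem_erase hi)
  rw [h2]
  have h3 : ∑ i ∈ Finset.univ.erase k, γ k i * ((a - v i) ^ 2 - (v k - v i) ^ 2)
      = ∑ i, γ k i * ((a - v i) ^ 2 - (v k - v i) ^ 2) :=
    Finset.sum_erase _ (by simp [hdiag])
  rw [h3, two_mul]

/-- if `G` is connected and balanced with both parts of the
Cartwright–Harary partition nonempty and at least one strictly negative cross
edge, then any global minimum `x` of `E` with `κ > 0` has all `V₁`-coordinates
positive and all `V₂`-coordinates negative (possibly after replacing `x` by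
`-x`); in particular `x` is not a nonzero constant vector. -/
theorem stmt17 (n : ℕ) (γ : Fin n → Fin n → ℝ)
    (hsym : ∀ i j, γ i j = γ j i) (hdiag : ∀ i, γ i i = 0)
    (hconn : ∀ i j : Fin n, Relation.ReflTransGen (fun a b => γ a b ≠ 0) i j)
    (σ : Fin n → Bool)
    (hpart : ∀ i j, (σ i = σ j → 0 ≤ γ i j) ∧ (σ i ≠ σ j → γ i j ≤ 0))
    (hV1 : ∃ i, σ i = true) (hV2 : ∃ i, σ i = false)
    (hcross : ∃ i j, σ i = true ∧ σ j = false ∧ γ i j < 0)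
    (W : ℝ → ℝ) (m : ℝ) (hm : 0 < m)
    (hW : ContDiff ℝ 2 W) (heven : ∀ t, W (-t) = W t) (hWm : W m = 0)
    (hpos : ∀ t, t ∈ Set.Ioo (-m) 0 ∪ Set.Ioi m → 0 < deriv W t)
    (hneg : ∀ t, t ∈ Set.Iio (-m) ∪ Set.Ioo 0 m → deriv W t < 0)
    (hgrowth : Filter.Tendsto (fun t => W t / t ^ 2) (Filter.cocompact ℝ) Filter.atTop)
    (κ : ℝ) (hκ : 0 < κ)
    (E : (Fin n → ℝ) → ℝ)
    (hE : ∀ x, E x = ∑ i, W (x i) + κ / 2 * ∑ i, ∑ j, γ i j * (x i - x j) ^ 2)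
    (x : Fin n → ℝ) (hmin : ∀ y, E x ≤ E y) :
    ((∀ i, (σ i = true → 0 < x i) ∧ (σ i = false → x i < 0)) ∨
      (∀ i, (σ i = true → x i < 0) ∧ (σ i = false → 0 < x i))) ∧
    (∀ c : ℝ, c ≠ 0 → x ≠ fun _ => c) := by
  classical
  set s : Fin n → ℝ := fun i => if σ i then 1 else -1 with hsdef
  have hs1 : ∀ i, σ i = true → s i = 1 := fun i h => by simp [hsdef, h]
  have hs0 : ∀ i, σ i = false → s i = -1 := fun i h => by simp [hsdef, h]
  have hsor : ∀ i, s i = 1 ∨ s i = -1 := by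
    intro i; cases h : σ i
    · exact Or.inr (hs0 i h)
    · exact Or.inl (hs1 i h)
  have hsne : ∀ i, s i ≠ 0 := by
    intro i; rcases hsor i with h | h <;> rw [h] <;> norm_num
  have hssq : ∀ i, s i * s i = 1 := by
    intro i; rcases hsor i with h | h <;> rw [h] <;> norm_num
  have hWabs : ∀ t, W |t| = W t := by
    intro t; rcases abs_choice t with h | h
    · rw [h]
    · rw [h, heven]
  have hWs : ∀ (i : Fin n) (t : ℝ), W (s i * t) = W t := by
    intro i t; rcases hsor i with h | h <;> rw [h]
    · rw [one_mul]
    · rw [neg_one_mul, heven]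
  have hanti : StrictAntiOn W (Set.Icc 0 m) := by
    refine strictAntiOn_of_deriv_neg (convex_Icc 0 m) hW.continuous.continuousOn ?_
    intro t ht
    rw [interior_Icc] at ht
    exact hneg t (Or.inr ht)
  have hWt0 : ∀ t, 0 < t → t ≤ m → W t < W 0 := by
    intro t ht htm
    have := hanti (Set.mem_Icc.2 ⟨le_refl 0, hm.le⟩) (Set.mem_Icc.2 ⟨ht.le, htm⟩) ht
    exact this
  have hW0 : 0 < W 0 := by
    have := hWt0 m hm le_rfl
    rw [hWm] at this; linarith
  have hγ' : ∀ i j, 0 ≤ s i * s j * γ i j := by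
    intro i j
    by_cases h : σ i = σ j
    · have hss : s i = s j := by simp [hsdef, h]
      have h1 := (hpart i j).1 h
      have h2 : s i * s j * γ i j = γ i j := by
        rw [hss]; linear_combination (γ i j) * hssq j
      rw [h2]; exact h1
    · have hss : s i = -s j := by
        cases hσi : σ i <;> cases hσj : σ j <;>
          simp [hsdef, hσi, hσj] at h ⊢
      have h1 := (hpart i j).2 h
      have h2 : s i * s j * γ i j = -γ i j := by
        rw [hss]; linear_combination (-(γ i j)) * hssq j
      rw [h2]; linarith
  have hγ'ne : ∀ i j, γ i j ≠ 0 → 0 < s i * s j * γ i j := by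
    intro i j h
    refine lt_of_le_of_ne (hγ' i j) (Ne.symm ?_)
    exact mul_ne_zero (mul_ne_zero (hsne i) (hsne j)) h
  -- E x < 0
  have hExneg : E x < 0 := by
    refine lt_of_le_of_lt (hmin fun i => s i * m) ?_
    rw [hE]
    have hWsum : ∑ i, W (s i * m) = 0 :=
      Finset.sum_eq_zero fun i _ => by rw [hWs i m, hWm]
    rw [hWsum, zero_add]
    obtain ⟨i0, j0, hσ0, hσ1, hγ0⟩ := hcross
    have hterm : ∀ i j, γ i j * (s i * m - s j * m) ^ 2 ≤ 0 := by
      intro i j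
      by_cases h : σ i = σ j
      · have hss : s i = s j := by simp [hsdef, h]
        rw [hss]; simp
      · exact mul_nonpos_of_nonpos_of_nonneg ((hpart i j).2 h) (sq_nonneg _)
    have h0 : γ i0 j0 * (s i0 * m - s j0 * m) ^ 2 < 0 := by
      rw [hs1 i0 hσ0, hs0 j0 hσ1]
      have he : ((1:ℝ) * m - (-1) * m) ^ 2 = 4 * m ^ 2 := by ring
      rw [he]
      exact mul_neg_of_neg_of_pos hγ0 (by positivity)
    have hinner : ∀ i, ∑ j, γ i j * (s i * m - s j * m) ^ 2 ≤ 0 := fun i =>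
      Finset.sum_nonpos fun j _ => hterm i j
    have hi0' : ∑ j, γ i0 j * (s i0 * m - s j * m) ^ 2 < 0 := by
      have := Finset.sum_lt_sum (s := Finset.univ)
        (f := fun j => γ i0 j * (s i0 * m - s j * m) ^ 2) (g := fun _ => (0:ℝ))
        (fun j _ => hterm i0 j) ⟨j0, Finset.mem_univ j0, h0⟩
      simpa using this
    have hq : ∑ i, ∑ j, γ i j * (s i * m - s j * m) ^ 2 < 0 := by
      have := Finset.sum_lt_sum (s := Finset.univ)
        (f := fun i => ∑ j, γ i j * (s i * m - s j * m) ^ 2) (g := fun _ => (0:ℝ))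
        (fun i _ => hinner i) ⟨i0, Finset.mem_univ i0, hi0'⟩
      simpa using this
    exact mul_neg_of_pos_of_neg (by positivity) hq
  -- mirrored configuration
  set y : Fin n → ℝ := fun i => s i * |x i| with hydef
  have hWy : ∀ i, W (y i) = W (x i) := by
    intro i; simp only [hydef]; rw [hWs, hWabs]
  have hysq : ∀ i j, (y i - y j) ^ 2 =
      if σ i = σ j then (|x i| - |x j|) ^ 2 else (|x i| + |x j|) ^ 2 := by
    intro i j
    by_cases h : σ i = σ j
    · have hss : s i = s j := by simp [hsdef, h]
      rw [if_pos h]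
      simp only [hydef]
      rw [hss]
      have := hssq j
      nlinarith [hssq j]
    · have hss : s i = -s j := by
        cases hσi : σ i <;> cases hσj : σ j <;>
          simp [hsdef, hσi, hσj] at h ⊢
      rw [if_neg h]
      simp only [hydef]
      rw [hss]
      nlinarith [hssq j]
  have hqle : ∀ i j, γ i j * (y i - y j) ^ 2 ≤ γ i j * (x i - x j) ^ 2 := by
    intro i j
    rw [hysq i j]
    by_cases h : σ i = σ j
    · rw [if_pos h]
      exact mul_le_mul_of_nonneg_left (abs_sub_sq_le' (x i) (x j)) ((hpart i j).1 h)
    · rw [if_neg h]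
      have h1 := (hpart i j).2 h
      nlinarith [sub_sq_le_abs_add' (x i) (x j)]
  have hWsumeq : ∑ i, W (y i) = ∑ i, W (x i) :=
    Finset.sum_congr rfl fun i _ => hWy i
  have hqsum : ∑ i, ∑ j, γ i j * (y i - y j) ^ 2 ≤ ∑ i, ∑ j, γ i j * (x i - x j) ^ 2 :=
    Finset.sum_le_sum fun i _ => Finset.sum_le_sum fun j _ => hqle i j
  have hEle : E y ≤ E x := by
    rw [hE, hE, hWsumeq]
    have hk2 : (0:ℝ) ≤ κ / 2 := by positivity
    nlinarith [mul_le_mul_of_nonneg_left hqsum hk2]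
  have hEyx : E y = E x := le_antisymm hEle (hmin y)
  have hmy : ∀ w, E y ≤ E w := fun w => hEyx.le.trans (hmin w)
  -- termwise equality
  have hqsumeq : ∑ i, ∑ j, γ i j * (y i - y j) ^ 2 = ∑ i, ∑ j, γ i j * (x i - x j) ^ 2 := by
    have h1 : κ / 2 * ∑ i, ∑ j, γ i j * (y i - y j) ^ 2
        = κ / 2 * ∑ i, ∑ j, γ i j * (x i - x j) ^ 2 := by
      have := hEyx
      rw [hE, hE, hWsumeq] at this
      linarith
    have hk : (κ / 2) ≠ 0 := by positivity
    exact mul_left_cancel₀ hk h1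
  have hTeq : ∀ i j, γ i j * (y i - y j) ^ 2 = γ i j * (x i - x j) ^ 2 := by
    have hS : ∑ i, ∑ j, (γ i j * (x i - x j) ^ 2 - γ i j * (y i - y j) ^ 2) = 0 := by
      simp only [Finset.sum_sub_distrib]
      rw [hqsumeq, sub_self]
    have hrow := (Finset.sum_eq_zero_iff_of_nonneg
      (fun i _ => Finset.sum_nonneg fun j _ => sub_nonneg.2 (hqle i j))).1 hS
    intro i j
    have := (Finset.sum_eq_zero_iff_of_nonneg
      (fun j _ => sub_nonneg.2 (hqle i j))).1 (hrow i (Finset.mem_univ i)) j (Finset.mem_univ j)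
    linarith
  -- no zero coordinates
  have hzero : ∀ k, x k = 0 → ∀ j, γ k j ≠ 0 → x j = 0 := by
    intro k hk
    set A := ∑ j, s k * s j * γ k j * |x j| with hA
    have hAnn : ∀ j, 0 ≤ s k * s j * γ k j * |x j| := fun j =>
      mul_nonneg (hγ' k j) (abs_nonneg _)
    by_cases hApos : 0 < A
    · exfalso
      have hyk : y k = 0 := by simp [hydef, hk]
      set B := ∑ j, γ k j with hB
      set t := min m (A / (|B| + 1)) with ht
      have hBpos : (0:ℝ) < |B| + 1 := by positivity
      have ht0 : 0 < t := lt_min hm (div_pos hApos hBpos)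
      have htm : t ≤ m := min_le_left _ _
      have htB : t * B < 2 * A := by
        have h1 : t ≤ A / (|B| + 1) := min_le_right _ _
        have h2 : t * (|B| + 1) ≤ A := (le_div_iff₀ hBpos).1 h1
        nlinarith [le_abs_self B, mul_le_mul_of_nonneg_left (le_abs_self B) ht0.le]
      set a := s k * t with ha
      set z := Function.update y k a with hzdef
      have hWz : ∑ i, W (z i) = (∑ i, W (y i)) - W 0 + W t := by
        have e1 : ∑ i, W (z i) = W (z k) + ∑ i ∈ Finset.univ.erase k, W (z i) :=
          (Finset.add_sum_erase _ (fun i => W (z i)) (Finset.mem_univ k)).symm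
        have e2 : ∑ i, W (y i) = W (y k) + ∑ i ∈ Finset.univ.erase k, W (y i) :=
          (Finset.add_sum_erase _ (fun i => W (y i)) (Finset.mem_univ k)).symm
        have e3 : ∑ i ∈ Finset.univ.erase k, W (z i) = ∑ i ∈ Finset.univ.erase k, W (y i) :=
          Finset.sum_congr rfl fun i hi => by
            rw [hzdef, Function.update_of_ne (Finset.ne_of_mem_erase hi)]
        have e4 : W (z k) = W t := by
          rw [hzdef, Function.update_self, ha, hWs]
        rw [e1, e2, e3, e4, hyk]
        ring
      have hQz : ∑ i, ∑ j, γ i j * (z i - z j) ^ 2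
          = (∑ i, ∑ j, γ i j * (y i - y j) ^ 2) + 2 * (t ^ 2 * B - 2 * t * A) := by
        rw [hzdef, quad_update' γ hsym hdiag y k a]
        congr 1
        have hterm : ∀ j, γ k j * ((a - y j) ^ 2 - (y k - y j) ^ 2)
            = t ^ 2 * γ k j - 2 * t * (s k * s j * γ k j * |x j|) := by
          intro j
          rw [hyk]
          simp only [hydef, ha]
          linear_combination (γ k j * t ^ 2) * hssq k
        rw [Finset.sum_congr rfl fun j _ => hterm j]
        rw [Finset.sum_sub_distrib, ← Finset.mul_sum, ← Finset.mul_sum, ← hA, ← hB]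
      have hEz : E z < E y := by
        rw [hE, hE, hWz, hQz]
        have hWt := hWt0 t ht0 htm
        have hq2 : t * B - 2 * A < 0 := by linarith
        have hneg2 : κ * (t * (t * B - 2 * A)) < 0 :=
          mul_neg_of_pos_of_neg hκ (mul_neg_of_pos_of_neg ht0 hq2)
        nlinarith
      exact absurd (hmy z) (not_le.2 hEz)
    · intro j hj
      have hA0 : A = 0 :=
        le_antisymm (not_lt.1 hApos) (Finset.sum_nonneg fun j _ => hAnn j)
      have h0 := (Finset.sum_eq_zero_iff_of_nonneg (fun j _ => hAnn j)).1 hA0 j (Finset.mem_univ j)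
      have hne := hγ'ne k j hj
      have habs : |x j| = 0 := by
        rcases mul_eq_zero.1 h0 with h | h
        · exact absurd h (ne_of_gt hne)
        · exact h
      exact abs_eq_zero.1 habs
  have hnz : ∀ i, x i ≠ 0 := by
    intro k hk
    have hall : ∀ j, x j = 0 := by
      intro j
      have h := hconn k j
      induction h with
      | refl => exact hk
      | tail _ hbc ih => exact hzero _ ih _ hbc
    have hEx0 : E x = n * W 0 := by
      rw [hE]
      have h1 : ∑ i, W (x i) = n * W 0 := by
        rw [Finset.sum_congr rfl fun i _ => by rw [hall i]]
        simp [mul_comm]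
      have h2 : ∑ i, ∑ j, γ i j * (x i - x j) ^ 2 = 0 := by
        refine Finset.sum_eq_zero fun i _ => Finset.sum_eq_zero fun j _ => ?_
        rw [hall i, hall j]; ring
      rw [h1, h2, mul_zero, add_zero]
    rw [hEx0] at hExneg
    nlinarith [hW0]
  -- sign structure along edges
  have hedge : ∀ i j, γ i j ≠ 0 → 0 < (x i * s i) * (x j * s j) := by
    intro i j hγij
    have h0 := hTeq i j
    have hsq : (y i - y j) ^ 2 = (x i - x j) ^ 2 := mul_left_cancel₀ hγij h0
    rw [hysq i j] at hsq
    by_cases h : σ i = σ j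
    · rw [if_pos h] at hsq
      have hnn := mul_nonneg_of_eq' (x i) (x j) hsq
      have hpos' : 0 < x i * x j :=
        lt_of_le_of_ne hnn (Ne.symm (mul_ne_zero (hnz i) (hnz j)))
      have hss : s i = s j := by simp [hsdef, h]
      have : (x i * s i) * (x j * s j) = x i * x j := by
        rw [hss]
        linear_combination (x i * x j) * hssq j
      rw [this]; exact hpos'
    · rw [if_neg h] at hsq
      have hnn := mul_nonpos_of_eq' (x i) (x j) hsq
      have hneg' : x i * x j < 0 :=
        lt_of_le_of_ne hnn (mul_ne_zero (hnz i) (hnz j))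
      have hss : s i = -s j := by
        cases hσi : σ i <;> cases hσj : σ j <;>
          simp [hsdef, hσi, hσj] at h ⊢
      have : (x i * s i) * (x j * s j) = -(x i * x j) := by
        rw [hss]
        linear_combination (-(x i * x j)) * hssq j
      rw [this]; linarith
  -- propagate sign
  obtain ⟨i₁, hi₁⟩ := hV1
  set u : Fin n → ℝ := fun i => x i * s i with hudef
  have hune : ∀ i, u i ≠ 0 := fun i => mul_ne_zero (hnz i) (hsne i)
  have hsame : ∀ j, 0 < u i₁ * u j := by
    intro j
    have h := hconn i₁ j
    induction h with
    | refl => exact mul_self_pos.2 (hune i₁)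
    | tail _ hbc ih =>
      rename_i b c _
      have h1 : 0 < u b * u c := hedge b c hbc
      have h2 : 0 < u b * u b := mul_self_pos.2 (hune b)
      nlinarith
  have hmain : (∀ i, (σ i = true → 0 < x i) ∧ (σ i = false → x i < 0)) ∨
      (∀ i, (σ i = true → x i < 0) ∧ (σ i = false → 0 < x i)) := by
    rcases lt_trichotomy (u i₁) 0 with h1 | h1 | h1
    · right
      intro i
      have hui : u i < 0 := by nlinarith [hsame i]
      constructor
      · intro hσ
        have := hs1 i hσ
        simp only [hudef, this, mul_one] at hui
        exact hui
      · intro hσ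
        have := hs0 i hσ
        simp only [hudef, this, mul_neg_one] at hui
        linarith
    · exact absurd h1 (hune i₁)
    · left
      intro i
      have hui : 0 < u i := by nlinarith [hsame i]
      constructor
      · intro hσ
        have := hs1 i hσ
        simp only [hudef, this, mul_one] at hui
        exact hui
      · intro hσ
        have := hs0 i hσ
        simp only [hudef, this, mul_neg_one] at hui
        linarith
  refine ⟨hmain, ?_⟩
  intro c hc hxc
  obtain ⟨iF, hiF⟩ := hV2
  have hxT : x i₁ = c := by rw [hxc]
  have hxF : x iF = c := by rw [hxc]
  rcases hmain with h | h
  · have h1 := (h i₁).1 hi₁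
    have h2 := (h iF).2 hiF
    rw [hxT] at h1; rw [hxF] at h2; linarith
  · have h1 := (h i₁).1 hi₁
    have h2 := (h iF).2 hiF
    rw [hxT] at h1; rw [hxF] at h2; linarith
end

section
/- Let x be a critical point of E (i.e., ∇E(x) = 0 with κ > 0) such that γᵢⱼ x̃ⱼ has the same sign for all j (where x̃ is the sign-adjusted vector with xᵢ = x̃ᵢ = 0 at vertex i). If xᵢ = 0, then for every neighbor j of i (γᵢⱼ ≠ 0) we have xⱼ = 0; consequently, if G is connected and binds all vertices, x = 0. -/
/-!
At a critical point with `xᵢ = 0` and `W'(0) = 0`, the `i`-th equation collapses to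
`Σ_{j≠i} γᵢⱼ xⱼ = 0`. For a sign-adjusted `x` every summand `γᵢⱼ xⱼ` has the sign of the side
of `i` in the balanced partition, so all summands vanish, i.e. `xⱼ = 0` at every neighbour `j`.
Zeros therefore spread along edges, and connectedness spreads them to every vertex.
-/

open Finset

section SignAdjusted

variable {ι : Type*} {γ : ι → ι → ℝ} {σ : ι → Bool} {x : ι → ℝ}

theorem mul_nonneg_of_side_true (hpart : ∀ i j, (σ i = σ j → 0 ≤ γ i j) ∧ (σ i ≠ σ j → γ i j ≤ 0))
    (hsign : ∀ j, (σ j = true → 0 ≤ x j) ∧ (σ j = false → x j ≤ 0))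
    {i : ι} (hi : σ i = true) (k : ι) : 0 ≤ γ i k * x k := by
  cases hk : σ k
  · exact mul_nonneg_of_nonpos_of_nonpos ((hpart i k).2 (by simp [hi, hk])) ((hsign k).2 hk)
  · exact mul_nonneg ((hpart i k).1 (by simp [hi, hk])) ((hsign k).1 hk)

theorem mul_nonpos_of_side_false
    (hpart : ∀ i j, (σ i = σ j → 0 ≤ γ i j) ∧ (σ i ≠ σ j → γ i j ≤ 0))
    (hsign : ∀ j, (σ j = true → 0 ≤ x j) ∧ (σ j = false → x j ≤ 0))
    {i : ι} (hi : σ i = false) (k : ι) : γ i k * x k ≤ 0 := by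
  cases hk : σ k
  · exact mul_nonpos_of_nonneg_of_nonpos ((hpart i k).1 (by simp [hi, hk])) ((hsign k).2 hk)
  · exact mul_nonpos_of_nonpos_of_nonneg ((hpart i k).2 (by simp [hi, hk])) ((hsign k).1 hk)

theorem eq_zero_of_sum_mul_eq_zero
    (hpart : ∀ i j, (σ i = σ j → 0 ≤ γ i j) ∧ (σ i ≠ σ j → γ i j ≤ 0))
    (hsign : ∀ j, (σ j = true → 0 ≤ x j) ∧ (σ j = false → x j ≤ 0))
    {s : Finset ι} {i k : ι} (hsum : ∑ j ∈ s, γ i j * x j = 0) (hk : k ∈ s) (hγ : γ i k ≠ 0) :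
    x k = 0 := by
  have hterm : γ i k * x k = 0 := by
    cases hi : σ i
    · exact (sum_eq_zero_iff_of_nonpos fun j _ ↦ mul_nonpos_of_side_false hpart hsign hi j).mp
        hsum k hk
    · exact (sum_eq_zero_iff_of_nonneg fun j _ ↦ mul_nonneg_of_side_true hpart hsign hi j).mp
        hsum k hk
  exact (mul_eq_zero.mp hterm).resolve_left hγ

end SignAdjusted

theorem sum_mul_eq_zero_of_crit {ι : Type*} {s : Finset ι} {γ : ι → ι → ℝ} {x : ι → ℝ}
    {f : ℝ → ℝ} {κ : ℝ} {i : ι} (hf : f 0 = 0) (hκ : κ ≠ 0)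
    (hcrit : 2 * κ * ∑ j ∈ s, γ i j * (x i - x j) + f (x i) = 0) (hi : x i = 0) :
    ∑ j ∈ s, γ i j * x j = 0 := by
  simpa only [hi, hf, zero_sub, mul_neg, sum_neg_distrib, add_zero, mul_eq_zero, neg_eq_zero,
    hκ, OfNat.ofNat_ne_zero, or_false, false_or] using hcrit

theorem Relation.ReflTransGen.of_forall_imp {α : Type*} {r : α → α → Prop} {P : α → Prop}
    (hP : ∀ a b, r a b → P a → P b) {a b : α} (hab : Relation.ReflTransGen r a b) (ha : P a) :
    P b := by
  induction hab with
  | refl => exact ha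
  | tail _ hbc ih => exact hP _ _ hbc ih

theorem stmt18_general (n : ℕ) (γ : Fin n → Fin n → ℝ)
    (hconn : ∀ i j : Fin n, Relation.ReflTransGen (fun a b => γ a b ≠ 0) i j)
    (σ : Fin n → Bool)
    (hpart : ∀ i j, (σ i = σ j → 0 ≤ γ i j) ∧ (σ i ≠ σ j → γ i j ≤ 0))
    (W : ℝ → ℝ)
    (hW'0 : deriv W 0 = 0)
    (κ : ℝ) (hκ : 0 < κ)
    (x : Fin n → ℝ)
    (hsign : ∀ j, (σ j = true → 0 ≤ x j) ∧ (σ j = false → x j ≤ 0))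
    (hcrit : ∀ i, 2 * κ * ∑ j ∈ Finset.univ.erase i, γ i j * (x i - x j)
      + deriv W (x i) = 0) :
    (∀ i, x i = 0 → ∀ j, γ i j ≠ 0 → x j = 0) ∧
    ((∃ i, x i = 0) → x = 0) := by
  have zero_at_neighbours : ∀ i, x i = 0 → ∀ j, γ i j ≠ 0 → x j = 0 := by
    intro i hi j hγ
    obtain rfl | hji := eq_or_ne j i
    · exact hi
    exact eq_zero_of_sum_mul_eq_zero hpart hsign
      (sum_mul_eq_zero_of_crit hW'0 hκ.ne' (hcrit i) hi) (by simp [hji]) hγ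
  refine ⟨zero_at_neighbours, fun ⟨i, hi⟩ ↦ funext fun j ↦ ?_⟩
  exact (hconn i j).of_forall_imp (fun a b hab ha ↦ zero_at_neighbours a ha b hab) hi

/-- let `x` be a critical point of `E` (`κ > 0`, component
equations `2κ Σ_{j≠i} γᵢⱼ(xᵢ - xⱼ) + W'(xᵢ) = 0`) that is sign-adjusted for the
balanced partition `σ` (so all `γᵢⱼ xⱼ` have the same sign for each fixed `i`).
If `xᵢ = 0` then `xⱼ = 0` for every neighbor `j` of `i`; consequently, since `G`
is connected, if some coordinate vanishes then `x = 0`. -/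
theorem stmt18 (n : ℕ) (γ : Fin n → Fin n → ℝ)
    (hsym : ∀ i j, γ i j = γ j i) (hdiag : ∀ i, γ i i = 0)
    (hconn : ∀ i j : Fin n, Relation.ReflTransGen (fun a b => γ a b ≠ 0) i j)
    (σ : Fin n → Bool)
    (hpart : ∀ i j, (σ i = σ j → 0 ≤ γ i j) ∧ (σ i ≠ σ j → γ i j ≤ 0))
    (W : ℝ → ℝ) (hW : ContDiff ℝ 2 W) (heven : ∀ t, W (-t) = W t)
    (hW'0 : deriv W 0 = 0)
    (κ : ℝ) (hκ : 0 < κ)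
    (x : Fin n → ℝ)
    (hsign : ∀ j, (σ j = true → 0 ≤ x j) ∧ (σ j = false → x j ≤ 0))
    (hcrit : ∀ i, 2 * κ * ∑ j ∈ Finset.univ.erase i, γ i j * (x i - x j)
      + deriv W (x i) = 0) :
    (∀ i, x i = 0 → ∀ j, γ i j ≠ 0 → x j = 0) ∧
    ((∃ i, x i = 0) → x = 0) :=
  stmt18_general n γ hconn σ hpart W hW'0 κ hκ x hsign hcrit
end
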